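/- arXiv:1005.5542 — 8 statements merged into one kernel-verified Lean document; each statement's English description precedes it below -/
import Mathlib

section
/- The constant zero function c₀ is a limit point of the set A = {f_{n,k} : n > 1, k ∈ ω} in C_k(M,2), where f_{n,k} is the characteristic function of M \ U(n,k), since for each n, f_{n,k} converges to f_n as k → ∞ (in the compact-open topology), and f_n converges to c₀ as n → ∞. -/
open Filter Topology

/-- The countable metric fan `M = (ω × ω) ∪ {∞}`; `none` plays the role of `∞`. -/
def Fan : Type := Option (ℕ × ℕ)

/-- The basic neighborhood `U(n) = {∞} ∪ ((ω \ n) × ω)` of `∞`. -/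
def fanU (n : ℕ) : Set Fan := {x | x = none ∨ ∃ p : ℕ × ℕ, x = some p ∧ n ≤ p.1}

/-- The fan topology: points of `ω × ω` are isolated and the sets `U(n)` are
basic neighborhoods of `∞`. -/
instance : TopologicalSpace Fan :=
  TopologicalSpace.generateFrom
    ({V | ∃ p : ℕ × ℕ, V = {some p}} ∪ {V | ∃ n : ℕ, V = fanU n})

/-- The set `U(n,k) = ({0} × n) ∪ ((n \ {0}) × k) ∪ U(n)`. -/
def fanUnk (n k : ℕ) : Set Fan :=
  {x | ∃ j : ℕ, j < n ∧ x = some (0, j)} ∪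
  {x | ∃ i j : ℕ, 0 < i ∧ i < n ∧ j < k ∧ x = some (i, j)} ∪
  fanU n

/-!
A compact subset of the fan contains only finitely many points outside each `U(n)`, so on a
compact set `f_{n,k}` eventually (in `k`) agrees with `f_n`, and `f_n` eventually (in `n`)
vanishes. In the compact-open topology this is convergence, so `c₀` lies in the closure of the
closure of `A`; and `c₀ ∉ A` because `f_{n,k}(0, n) = 1`.
-/

lemma ContinuousMap.tendsto_of_eventually_eqOn {ι X Y : Type*} [TopologicalSpace X]
    [TopologicalSpace Y] {l : Filter ι} {F : ι → C(X, Y)} {f : C(X, Y)}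
    (h : ∀ K, IsCompact K → ∀ᶠ i in l, Set.EqOn (F i) f K) : Tendsto F l (𝓝 f) := by
  refine ContinuousMap.tendsto_nhds_compactOpen.2 fun K hK U _ hfKU => ?_
  filter_upwards [h K hK] with i hi x hx
  exact hi hx ▸ hfKU hx

namespace Fan

lemma isOpen_fanU (n : ℕ) : IsOpen (fanU n) :=
  TopologicalSpace.isOpen_generateFrom_of_mem (Or.inr ⟨n, rfl⟩)

lemma isOpen_singleton_some (p : ℕ × ℕ) : IsOpen ({some p} : Set Fan) :=
  TopologicalSpace.isOpen_generateFrom_of_mem (Or.inl ⟨p, rfl⟩)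

/- `Fan` is not reducible to `Option (ℕ × ℕ)`, so `simp` cannot see through membership in the
sets defining it; the `show`s below restate membership on `Option (ℕ × ℕ)`. -/
lemma mem_fanU_some {n : ℕ} {p : ℕ × ℕ} : some p ∈ fanU n ↔ n ≤ p.1 := by
  show some p = none ∨ (∃ q, some p = some q ∧ n ≤ q.1) ↔ _
  simp

lemma mem_fanUnk_some {n k i j : ℕ} :
    some (i, j) ∈ fanUnk n k ↔ (i = 0 ∧ j < n) ∨ (0 < i ∧ i < n ∧ j < k) ∨ n ≤ i := by
  show ((∃ j', j' < n ∧ some (i, j) = some (0, j')) ∨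
      ∃ i' j', 0 < i' ∧ i' < n ∧ j' < k ∧ some (i, j) = some (i', j')) ∨
      some (i, j) = none ∨ (∃ p, some (i, j) = some p ∧ n ≤ p.1) ↔ _
  simp
  omega

lemma none_mem_fanUnk (n k : ℕ) : (none : Fan) ∈ fanUnk n k :=
  Or.inr (Or.inl rfl)

lemma finite_diff_fanU {K : Set Fan} (hK : IsCompact K) (n : ℕ) : (K \ fanU n).Finite := by
  have hcover : K \ fanU n ⊆ ⋃ p : ℕ × ℕ, {some p} := by
    rintro (_ | p) ⟨-, hx⟩
    · exact absurd (Or.inl rfl) hx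
    · exact Set.mem_iUnion.2 ⟨p, rfl⟩
  obtain ⟨t, ht⟩ :=
    (hK.diff (isOpen_fanU n)).elim_finite_subcover _ isOpen_singleton_some hcover
  refine (t.finite_toSet.image some).subset fun x hx => ?_
  obtain ⟨p, hp, rfl⟩ := Set.mem_iUnion₂.1 (ht hx)
  exact ⟨p, hp, rfl⟩

lemma eventually_lt_of_isCompact {K : Set Fan} (hK : IsCompact K) (n : ℕ) :
    ∀ᶠ k in atTop, ∀ i j, some (i, j) ∈ K → i < n → j < k := by
  have hbound : ∀ x ∈ K \ fanU n, ∀ᶠ k in atTop, ∀ i j, x = some (i, j) → j < k := by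
    rintro (_ | ⟨i, j⟩) -
    · exact Eventually.of_forall fun _ _ _ h => absurd h nofun
    · filter_upwards [eventually_gt_atTop j] with k hk i' j' h
      obtain ⟨-, rfl⟩ := Prod.mk.inj (Option.some.inj h)
      exact hk
  filter_upwards [(finite_diff_fanU hK n).eventually_all.2 hbound] with k hk i j hx hi
  exact hk _ ⟨hx, mem_fanU_some.not.2 (Nat.not_le.2 hi)⟩ i j rfl

lemma eventually_notMem_fanUnk_iff {K : Set Fan} (hK : IsCompact K) {n : ℕ} (hn : 0 < n) :
    ∀ᶠ k in atTop, ∀ x ∈ K, x ∉ fanUnk n k ↔ ∃ j, n ≤ j ∧ x = some (0, j) := by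
  filter_upwards [eventually_lt_of_isCompact hK n] with k hk
  rintro (_ | ⟨i, j⟩) hx
  · exact iff_of_false (not_not_intro (none_mem_fanUnk n k)) nofun
  · have hj := hk i j hx
    refine (not_congr mem_fanUnk_some).trans ⟨fun h => ⟨j, by omega, ?_⟩, ?_⟩
    · rw [show i = 0 by omega]
    · rintro ⟨j', hj', h⟩
      obtain ⟨rfl, rfl⟩ := Prod.mk.inj (Option.some.inj h)
      omega

lemma eventually_forall_notMem_tail {K : Set Fan} (hK : IsCompact K) :
    ∀ᶠ n in atTop, ∀ x ∈ K, ¬∃ j, n ≤ j ∧ x = some (0, j) := by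
  filter_upwards [eventually_lt_of_isCompact hK 1] with n hn
  rintro x hx ⟨j, hj, rfl⟩
  exact absurd (hn 0 j hx one_pos) (Nat.not_lt.2 hj)

end Fan

theorem stmt0 (fnk : ℕ → ℕ → C(Fan, Bool)) (fl : ℕ → C(Fan, Bool)) (c0 : C(Fan, Bool))
    (hfnk : ∀ n k x, fnk n k x = true ↔ x ∉ fanUnk n k)
    (hfl : ∀ n x, fl n x = true ↔ ∃ j : ℕ, n ≤ j ∧ x = some (0, j))
    (hc0 : ∀ x, c0 x = false) :
    (∀ n, 1 < n → Tendsto (fun k => fnk n k) atTop (𝓝 (fl n))) ∧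
    Tendsto fl atTop (𝓝 c0) ∧
    c0 ∈ closure {f : C(Fan, Bool) | ∃ n k : ℕ, 1 < n ∧ f = fnk n k} ∧
    c0 ∉ {f : C(Fan, Bool) | ∃ n k : ℕ, 1 < n ∧ f = fnk n k} := by
  have hfnk_lim : ∀ n, 1 < n → Tendsto (fun k => fnk n k) atTop (𝓝 (fl n)) := by
    refine fun n hn => ContinuousMap.tendsto_of_eventually_eqOn fun K hK => ?_
    filter_upwards [Fan.eventually_notMem_fanUnk_iff hK (zero_lt_one.trans hn)] with k hk x hx
    exact Bool.eq_iff_iff.2 ((hfnk n k x).trans ((hk x hx).trans (hfl n x).symm))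
  have hfl_lim : Tendsto fl atTop (𝓝 c0) := by
    refine ContinuousMap.tendsto_of_eventually_eqOn fun K hK => ?_
    filter_upwards [Fan.eventually_forall_notMem_tail hK] with n hn x hx
    rw [hc0, Bool.eq_false_iff, ne_eq, hfl]
    exact hn x hx
  refine ⟨hfnk_lim, hfl_lim, ?_, ?_⟩
  · have hfl_mem : ∀ n, 1 < n → fl n ∈ closure {f | ∃ n k : ℕ, 1 < n ∧ f = fnk n k} :=
      fun n hn => mem_closure_of_tendsto (hfnk_lim n hn) (.of_forall fun k => ⟨n, k, hn, rfl⟩)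
    rw [← closure_closure]
    exact mem_closure_of_tendsto hfl_lim ((eventually_gt_atTop 1).mono hfl_mem)
  · rintro ⟨n, k, hn, rfl⟩
    have hpt : some (0, n) ∉ fanUnk n k := Fan.mem_fanUnk_some.not.2 (by omega)
    exact Bool.false_ne_true ((hc0 _).symm.trans ((hfnk n k _).2 hpt))
end

section
/- In C_k(M,2), for every sequence (k_n)_{n>1} of natural numbers, the constant zero function c₀ is not in the closure of the set {f_{n,k} : n > 1, k < k_n}. -/
open Filter Topology

/-! The maps vanishing on `K = {∞} ∪ {(n - 1, k_n) : n > 1}` form a compact-open neighbourhood of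
`c₀`; `K` is compact because `(n - 1, k_n) → ∞`, and each `f_{n,k}` with `k < k_n` takes the value
`1` at `(n - 1, k_n) ∈ K`. -/

theorem ContinuousMap.notMem_closure_of_mapsTo {X Y : Type*} [TopologicalSpace X]
    [TopologicalSpace Y] {K : Set X} (hK : IsCompact K) {U : Set Y} (hU : IsOpen U)
    {g : C(X, Y)} (hg : Set.MapsTo g K U) {S : Set C(X, Y)}
    (hS : ∀ f ∈ S, ¬ Set.MapsTo f K U) : g ∉ closure S := by
  rw [mem_closure_iff]
  push Not
  exact ⟨_, ContinuousMap.isOpen_setOfPred_mapsTo hK hU, hg,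
    Set.eq_empty_of_forall_notMem fun f ⟨hfK, hfS⟩ => hS f hfS hfK⟩

theorem Fan.tendsto_some_nhds_none {α : Type*} {l : Filter α} {a b : α → ℕ}
    (ha : Tendsto a l atTop) : Tendsto (β := Fan) (fun x => some (a x, b x)) l (𝓝 none) := by
  refine TopologicalSpace.tendsto_nhds_generateFrom_iff.mpr ?_
  rintro s (⟨p, rfl⟩ | ⟨n, rfl⟩) hnone
  · exact absurd (Set.mem_singleton_iff.mp hnone).symm (Option.some_ne_none p)
  · filter_upwards [ha.eventually_ge_atTop n] with x hx
    exact Or.inr ⟨_, rfl, hx⟩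

theorem some_sub_one_notMem_fanUnk {n k j : ℕ} (hn : 1 < n) (hkj : k ≤ j) :
    (some (n - 1, j) : Fan) ∉ fanUnk n k := by
  rintro ((⟨j', -, h⟩ | ⟨i, j', -, -, hj', h⟩) | (h | ⟨p, h, hp⟩))
  · obtain ⟨h, -⟩ := Prod.mk.inj (Option.some.inj h)
    omega
  · obtain ⟨-, h⟩ := Prod.mk.inj (Option.some.inj h)
    omega
  · exact Option.some_ne_none _ h
  · cases Option.some.inj h
    exact absurd hp (by dsimp only; omega)

theorem stmt1 (fnk : ℕ → ℕ → C(Fan, Bool)) (c0 : C(Fan, Bool))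
    (hfnk : ∀ n k x, fnk n k x = true ↔ x ∉ fanUnk n k)
    (hc0 : ∀ x, c0 x = false)
    (kseq : ℕ → ℕ) :
    c0 ∉ closure {f : C(Fan, Bool) | ∃ n k : ℕ, 1 < n ∧ k < kseq n ∧ f = fnk n k} := by
  set u : ℕ → Fan := fun n => some (n - 1, kseq n)
  have hK : IsCompact (insert none (Set.range u)) :=
    (Fan.tendsto_some_nhds_none (tendsto_sub_atTop_nat 1)).isCompact_insert_range
  refine ContinuousMap.notMem_closure_of_mapsTo hK (isOpen_discrete {false})
    (fun x _ => hc0 x) ?_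
  rintro _ ⟨n, k, hn, hk, rfl⟩ hmaps
  have htrue : fnk n k (u n) = true :=
    (hfnk n k _).mpr (some_sub_one_notMem_fanUnk hn hk.le)
  simpa [htrue] using hmaps (Set.mem_insert_of_mem _ ⟨n, rfl⟩)
end

section
/- The space C_k(M,2) of continuous {0,1}-valued functions on the countable metric fan M, with the compact-open topology, contains a closed subspace homeomorphic to the Arens space S₂. -/
open Filter Topology

/-- The convergent sequence `C₀ = {(0,0)} ∪ {(1/n, 0) : n ≥ 1}`. -/
def arensC0 : Set (ℝ × ℝ) :=
  {(0, 0)} ∪ {p | ∃ n : ℕ, 0 < n ∧ p = (1 / (n : ℝ), 0)}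

/-- The convergent sequence `Cₙ = {(1/n, 0)} ∪ {(1/n, 1/(nm)) : m ≥ 1}`. -/
def arensC (n : ℕ) : Set (ℝ × ℝ) :=
  {(1 / (n : ℝ), 0)} ∪ {p | ∃ m : ℕ, 0 < m ∧ p = (1 / (n : ℝ), 1 / ((n : ℝ) * (m : ℝ)))}

/-- The underlying set of the Arens space `S₂`. -/
def arensCarrier : Set (ℝ × ℝ) :=
  arensC0 ∪ ⋃ n ∈ {n : ℕ | 0 < n}, arensC n

/-- The Arens space `S₂` as a type. -/
def ArensS2 : Type := ↥arensCarrier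

/-- The convergent sequences indexing the inductive topology of `S₂`. -/
def arensSeq : Option {n : ℕ // 0 < n} → Set (ℝ × ℝ)
  | none => arensC0
  | some n => arensC n.val

/-- The Arens topology: the strongest (final/inductive) topology inducing the planar
topology on each of the convergent sequences `C₀, C₁, C₂, …`. -/
instance : TopologicalSpace ArensS2 :=
  ⨆ i : Option {n : ℕ // 0 < n},
    TopologicalSpace.coinduced
      (fun x : {x : ArensS2 // Subtype.val x ∈ arensSeq i} => x.val)
      (TopologicalSpace.induced
        (fun x : {x : ArensS2 // Subtype.val x ∈ arensSeq i} => Subtype.val (Subtype.val x))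
        inferInstance)

/-!
The embedding sends the origin of `S₂` to the constant `true`, `(1/n, 0)` to the indicator of
`U(n + 1, ω)` and `(1/n, 1/(nm))` to that of `U(n + 1, m)`. As `2` is discrete, the functions
agreeing with `g` on a compact `K ⊆ M` form a neighbourhood basis of `g`, and a compact subset of
`M` is bounded in each column. So each `C_n` converges to its limit, which gives continuity; and an
open set around the origin contains the preimage of such a basic set, where `K` takes one point of
each column `n`, at the height where the tail of `C_n` inside the open set begins. The range is
closed since it is cut out by conditions on at most three values each: columns `0` and `1` are
initial segments and any other column `i` equals column `1` or is constantly `true`, according to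
the value at `(0, i)`.
-/

open Set

namespace ContinuousMap

variable {X Y : Type*} [TopologicalSpace X] [TopologicalSpace Y] [DiscreteTopology Y]

theorem hasBasis_nhds_eqOn (f : C(X, Y)) :
    (𝓝 f).HasBasis IsCompact fun K => {g : C(X, Y) | EqOn g f K} := by
  refine ⟨fun s => ⟨fun hs => ?_, fun ⟨K, hK, hKs⟩ => mem_of_superset ?_ hKs⟩⟩
  · obtain ⟨S, hS, hSf, hSs⟩ := ContinuousMap.mem_nhds_iff.1 hs
    refine ⟨⋃ KU ∈ S, KU.1, hS.isCompact_biUnion fun KU hKU => (hSf _ _ hKU).1,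
      fun g hg => hSs fun K U hKU x hx => ?_⟩
    rw [hg (mem_biUnion hKU hx)]
    exact (hSf K U hKU).2.2 hx
  · have hfin : (f '' K).Finite := (hK.image f.continuous).finite_of_discrete
    refine mem_of_superset ((biInter_mem hfin).2 fun y _ =>
      eventually_mapsTo (hK.inter_right ((isClosed_discrete {y}).preimage f.continuous))
        (isOpen_discrete {y}) fun x hx => hx.2) fun g hg x hx => ?_
    exact mem_iInter₂.1 hg (f x) (mem_image_of_mem f hx) ⟨hx, rfl⟩

end ContinuousMap

theorem continuousOn_insert_range_of_tendsto {X Z : Type*} [TopologicalSpace X] [T2Space X]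
    [TopologicalSpace Z] {u : ℕ → X} {x : X} {F : X → Z} (hu : Tendsto u atTop (𝓝 x))
    (hF : Tendsto (F ∘ u) atTop (𝓝 (F x))) : ContinuousOn F (insert x (range u)) := by
  -- `insert x (range u)` is a quotient of the one-point compactification of `ℕ`.
  set v : OnePoint ℕ → X := fun p => p.elim x u
  have hv : Continuous v := (OnePoint.continuous_iff_from_nat v).2 hu
  have hrange : insert x (range u) = range v := by
    rw [← image_univ (f := v), ← OnePoint.insert_infty_range_coe, image_insert_eq, ← range_comp]
    rfl
  have hq : IsQuotientMap (rangeFactorization v) :=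
    (hv.rangeFactorization).isClosedMap.isQuotientMap hv.rangeFactorization
      rangeFactorization_surjective
  rw [hrange, continuousOn_iff_continuous_domRestrict, hq.continuous_iff]
  exact (OnePoint.continuous_iff_from_nat _).2 hF

theorem Bool.exists_eq_decide_lt_of_succ_le {f : ℕ → Bool} (hf : ∀ j, f (j + 1) ≤ f j) :
    ∃ b : ℕ∞, ∀ j, f j = decide ((j : ℕ∞) < b) := by
  by_cases h : ∃ j, f j = false
  · classical
    refine ⟨Nat.find h, fun j => ?_⟩
    rcases lt_or_ge j (Nat.find h) with hj | hj
    · simpa [hj] using Nat.find_min h hj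
    · have := antitone_nat_of_succ_le hf hj
      rw [Nat.find_spec h] at this
      simpa [not_lt.2 hj] using le_bot_iff.1 this
  · push Not at h
    exact ⟨⊤, fun j => by simpa using h j⟩

-- Unfolding `Fan` lets `some p` and `none` elaborate as its points; the instance is then
-- registered again so that it is also found for `Option (ℕ × ℕ)`.
attribute [reducible] Fan

attribute [instance] instTopologicalSpaceFan

namespace Fan

theorem nhds_some (p : ℕ × ℕ) : 𝓝 (some p : Fan) = pure (some p) :=
  (isOpen_singleton_iff_nhds_eq_pure _).1
    (TopologicalSpace.isOpen_generateFrom_of_mem (Or.inl ⟨p, rfl⟩))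

theorem fanU_antitone : Antitone fanU := by
  rintro m n hmn x (hx | ⟨p, rfl, hp⟩)
  exacts [Or.inl hx, Or.inr ⟨p, rfl, hmn.trans hp⟩]

theorem hasBasis_nhds_none : (𝓝 (none : Fan)).HasBasis (fun _ => True) fanU := by
  have h : 𝓝 (none : Fan) = ⨅ n, 𝓟 (fanU n) := by
    rw [TopologicalSpace.nhds_generateFrom]
    refine le_antisymm (le_iInf fun n => iInf₂_le _ ⟨Or.inl rfl, Or.inr ⟨n, rfl⟩⟩) ?_
    refine le_iInf₂ fun s ⟨hs, hgen⟩ => ?_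
    obtain ⟨p, rfl⟩ | ⟨n, rfl⟩ := hgen
    · simp at hs
    · exact iInf_le _ n
  rw [h]
  exact hasBasis_iInf_principal fanU_antitone.directed_ge

@[simp] theorem some_mem_fanU {n : ℕ} {p : ℕ × ℕ} : (some p : Fan) ∈ fanU n ↔ n ≤ p.1 := by
  simp only [fanU, mem_ofPred_eq, reduceCtorEq, Option.some.injEq, false_or]
  exact ⟨fun ⟨q, hq, h⟩ => hq ▸ h, fun h => ⟨p, rfl, h⟩⟩

theorem continuous_bool_iff {f : Fan → Bool} :
    Continuous f ↔ ∃ N, ∀ p : ℕ × ℕ, N ≤ p.1 → f (some p) = f none := by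
  rw [continuous_iff_continuousAt]
  constructor
  · intro h
    obtain ⟨N, -, hN⟩ := hasBasis_nhds_none.eventually_iff.1
      ((h none).eventually (isOpen_discrete {f none} |>.mem_nhds rfl))
    exact ⟨N, fun p hp => hN (some_mem_fanU.2 hp)⟩
  · rintro ⟨N, hN⟩ (_ | p)
    · refine (hasBasis_nhds_none.tendsto_iff (nhds_basis_opens _)).2 fun s ⟨hs, _⟩ => ⟨N, trivial, ?_⟩
      rintro x (rfl | ⟨p, rfl, hp⟩)
      exacts [hs, (hN p hp).symm ▸ hs]
    · rw [ContinuousAt, nhds_some]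
      exact tendsto_pure_nhds _ _

theorem tendsto_some_none (f : ℕ → ℕ) :
    Tendsto (fun k => (some (k, f k) : Fan)) atTop (𝓝 none) :=
  hasBasis_nhds_none.tendsto_right_iff.2 fun n _ =>
    (eventually_ge_atTop n).mono fun _ hk => some_mem_fanU.2 hk

theorem exists_snd_le_of_isCompact {K : Set Fan} (hK : IsCompact K) (n : ℕ) :
    ∃ M, ∀ p : ℕ × ℕ, some p ∈ K → p.1 ≤ n → p.2 ≤ M := by
  set V : ℕ → Set Fan := fun M => {x | ∀ p : ℕ × ℕ, x = some p → p.1 ≤ n → p.2 ≤ M}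
  have hV : ∀ M, IsOpen (V M) := fun M => isOpen_iff_mem_nhds.2 fun
    | none, _ => hasBasis_nhds_none.mem_iff.2 ⟨n + 1, trivial, fun x hx p hp hpn => by
        subst hp; have := some_mem_fanU.1 hx; omega⟩
    | some p, hp => by rw [nhds_some]; exact hp
  obtain ⟨M, hM⟩ := hK.elim_directed_cover V hV
    (fun x _ => mem_iUnion.2 <| match x with
      | none => ⟨0, fun _ h => by cases h⟩
      | some p => ⟨p.2, fun q h _ => by cases h; rfl⟩)
    (Monotone.directed_le fun M M' hMM' x hx p hp hpn => (hx p hp hpn).trans hMM')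
  exact ⟨M, fun p hp => hM hp p rfl⟩

end Fan

/-- The indicator function of the paper's `U(n + 1, b)` (`fanUnk (n + 1) b`), allowing `b = ⊤`. -/
def stair (n : ℕ) (b : ℕ∞) : C(Fan, Bool) where
  toFun
    | none => true
    | some (i, j) => if i = 0 then decide (j ≤ n) else decide (i ≤ n → (j : ℕ∞) < b)
  continuous_toFun := Fan.continuous_bool_iff.2 ⟨n + 1, fun p hp => by
    simp [show p.1 ≠ 0 by omega, show ¬p.1 ≤ n by omega]⟩

@[simp] theorem stair_zero (n j : ℕ) (b : ℕ∞) : stair n b (some (0, j)) = decide (j ≤ n) := rfl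

theorem stair_of_ne_zero {i : ℕ} (hi : i ≠ 0) (n j : ℕ) (b : ℕ∞) :
    stair n b (some (i, j)) = decide (i ≤ n → (j : ℕ∞) < b) :=
  if_neg hi

theorem tendsto_stair_top :
    Tendsto (fun n => stair n ⊤) atTop (𝓝 (ContinuousMap.const Fan true)) := by
  refine (ContinuousMap.hasBasis_nhds_eqOn _).tendsto_right_iff.2 fun K hK => ?_
  obtain ⟨M, hM⟩ := Fan.exists_snd_le_of_isCompact hK 0
  filter_upwards [eventually_ge_atTop M] with n hn
  rintro (_ | ⟨i, j⟩) hx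
  · rfl
  · rcases eq_or_ne i 0 with rfl | hi
    · simpa using (hM _ hx le_rfl).trans hn
    · simp [stair_of_ne_zero hi]

theorem tendsto_stair (n : ℕ) :
    Tendsto (fun m : ℕ => stair n m) atTop (𝓝 (stair n ⊤)) := by
  refine (ContinuousMap.hasBasis_nhds_eqOn _).tendsto_right_iff.2 fun K hK => ?_
  obtain ⟨M, hM⟩ := Fan.exists_snd_le_of_isCompact hK n
  filter_upwards [eventually_gt_atTop M] with m hm
  rintro (_ | ⟨i, j⟩) hx
  · rfl
  · rcases eq_or_ne i 0 with rfl | hi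
    · rfl
    · have := hM _ hx
      simp only [stair_of_ne_zero hi, ENat.natCast_lt_top, Nat.cast_lt]
      grind

def IsStaircase (g : C(Fan, Bool)) : Prop :=
  g none = true ∧ g (some (0, 1)) = true ∧ g (some (1, 0)) = true ∧
    (∀ j, g (some (0, j + 1)) ≤ g (some (0, j))) ∧ (∀ j, g (some (1, j + 1)) ≤ g (some (1, j))) ∧
    ∀ i j, i ≠ 0 → g (some (i, j)) = (!g (some (0, i)) || g (some (1, j)))

theorem isStaircase_const : IsStaircase (ContinuousMap.const Fan true) := by
  simp [IsStaircase]

theorem isStaircase_stair {n : ℕ} {b : ℕ∞} (hn : 0 < n) (hb : 0 < b) :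
    IsStaircase (stair n b) := by
  refine ⟨rfl, by simpa using Nat.one_le_of_lt hn, ?_, fun j => ?_, fun j => ?_, fun i j hi => ?_⟩
  · simpa [stair_of_ne_zero one_ne_zero, Nat.one_le_of_lt hn] using hb
  · simp only [stair_zero, Bool.le_iff_imp, decide_eq_true_eq]; omega
  · simp only [stair_of_ne_zero one_ne_zero, Bool.le_iff_imp, decide_eq_true_eq]
    intro h h1; exact lt_of_le_of_lt (by simp) (h h1)
  · by_cases hin : i ≤ n <;>
      simp [stair_of_ne_zero hi, stair_of_ne_zero one_ne_zero, Nat.one_le_of_lt hn, hin]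

theorem IsStaircase.eq_const_or_stair {g : C(Fan, Bool)} (hg : IsStaircase g) :
    g = ContinuousMap.const Fan true ∨ ∃ n b, 0 < n ∧ 0 < b ∧ g = stair n b := by
  obtain ⟨hnone, h01, h10, hcol0, hcol1, hcol⟩ := hg
  obtain ⟨a, ha⟩ := Bool.exists_eq_decide_lt_of_succ_le (f := fun j => g (some (0, j))) hcol0
  obtain ⟨b, hb⟩ := Bool.exists_eq_decide_lt_of_succ_le (f := fun j => g (some (1, j))) hcol1
  have ha1 : 1 < a := by simpa [ha] using h01
  have hb0 : 0 < b := by simpa [hb] using h10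
  cases a using ENat.recTopCoe with
  | top =>
    left
    obtain ⟨N, hN⟩ := Fan.continuous_bool_iff.1 g.continuous
    have h1 : ∀ j, g (some (1, j)) = true := fun j => by
      simpa [hcol (N + 1) j (by omega), ha, hnone] using hN (N + 1, j) (by simp)
    ext (_ | ⟨i, j⟩)
    · exact hnone
    · rcases eq_or_ne i 0 with rfl | hi
      · simp [ha]
      · simp [hcol i j hi, h1]
  | coe a =>
    right
    refine ⟨a - 1, b, by norm_cast at ha1; omega, hb0, ?_⟩
    norm_cast at ha1
    ext (_ | ⟨i, j⟩)
    · exact hnone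
    · rcases eq_or_ne i 0 with rfl | hi
      · simp [ha]; omega
      · simp only [hcol i j hi, ha, hb, stair_of_ne_zero hi, Nat.cast_lt]
        by_cases hia : i < a <;> simp [hia, show i ≤ a - 1 ↔ i < a by omega]

theorem isClosed_setOf_isStaircase : IsClosed {g : C(Fan, Bool) | IsStaircase g} := by
  have ev (x : Fan) : Continuous fun g : C(Fan, Bool) => g x := continuous_eval_const x
  have closed₂ (P : Bool → Bool → Prop) (x y : Fan) : IsClosed {g : C(Fan, Bool) | P (g x) (g y)} :=
    (isClosed_discrete {b : Bool × Bool | P b.1 b.2}).preimage ((ev x).prodMk (ev y))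
  simp only [IsStaircase, ofPred_and, ofPred_forall]
  refine (isClosed_eq (ev _) continuous_const).inter <| (isClosed_eq (ev _) continuous_const).inter <|
    (isClosed_eq (ev _) continuous_const).inter <|
    (isClosed_iInter fun _ => closed₂ (· ≤ ·) _ _).inter <|
    (isClosed_iInter fun _ => closed₂ (· ≤ ·) _ _).inter <|
    isClosed_iInter fun _ => isClosed_iInter fun _ => isClosed_iInter fun _ =>
      isClosed_eq (ev _) (continuous_of_discreteTopology.comp ((ev _).prodMk (ev _))
        (g := fun b : Bool × Bool => !b.1 || b.2))

noncomputable def arensCode (q : ℝ × ℝ) : C(Fan, Bool) :=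
  if q.1 = 0 then ContinuousMap.const Fan true
  else stair ⌊q.1⁻¹⌋₊ (if q.2 = 0 then ⊤ else ⌊q.1 / q.2⌋₊)

noncomputable def arensEmbedding (x : ArensS2) : C(Fan, Bool) := arensCode x.1

theorem mem_arensCarrier_of_mem_arensSeq {i : Option {n : ℕ // 0 < n}} {q : ℝ × ℝ}
    (hq : q ∈ arensSeq i) : q ∈ arensCarrier :=
  match i with
  | none => Or.inl hq
  | some n => Or.inr (mem_biUnion n.2 hq)

theorem limit_mem_arensC0 (n : ℕ) : (1 / (n : ℝ), (0 : ℝ)) ∈ arensC0 := by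
  rcases n.eq_zero_or_pos with rfl | hn
  · simp [arensC0]
  · exact Or.inr ⟨n, hn, rfl⟩

theorem isolated_mem_arensC (n m : ℕ) : (1 / (n : ℝ), 1 / ((n : ℝ) * m)) ∈ arensC n := by
  rcases m.eq_zero_or_pos with rfl | hm
  · simp [arensC]
  · exact Or.inr ⟨m, hm, rfl⟩

noncomputable def arensOrigin : ArensS2 := ⟨(0, 0), Or.inl (Or.inl rfl)⟩

/-- At `n = 0` this is the origin, as `1 / 0 = 0`. -/
noncomputable def arensLimit (n : ℕ) : ArensS2 :=
  ⟨(1 / n, 0), mem_arensCarrier_of_mem_arensSeq (i := none) (limit_mem_arensC0 n)⟩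

/-- At `n = 0` this is the origin and at `m = 0` it is `arensLimit n`, as `1 / 0 = 0`. -/
noncomputable def arensIsolated (n m : ℕ) : ArensS2 :=
  ⟨(1 / n, 1 / (n * m)), by
    rcases n.eq_zero_or_pos with rfl | hn
    · simp only [CharP.cast_eq_zero, div_zero, zero_mul]
      exact Or.inl (Or.inl rfl)
    · exact mem_arensCarrier_of_mem_arensSeq (i := some ⟨n, hn⟩) (isolated_mem_arensC n m)⟩

@[elab_as_elim]
theorem ArensS2.induction {P : ArensS2 → Prop} (origin : P arensOrigin)
    (limit : ∀ n, 0 < n → P (arensLimit n))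
    (isolated : ∀ n m, 0 < n → 0 < m → P (arensIsolated n m)) (x : ArensS2) : P x := by
  obtain ⟨q, (rfl | ⟨n, hn, rfl⟩) | hq⟩ := x
  · exact origin
  · exact limit n hn
  · obtain ⟨n, hn, rfl | ⟨m, hm, rfl⟩⟩ := mem_iUnion₂.1 hq
    · exact limit n hn
    · exact isolated n m hn hm

@[simp] theorem arensEmbedding_origin :
    arensEmbedding arensOrigin = ContinuousMap.const Fan true :=
  if_pos rfl

theorem arensEmbedding_limit {n : ℕ} (hn : 0 < n) : arensEmbedding (arensLimit n) = stair n ⊤ := by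
  simp [arensEmbedding, arensCode, arensLimit, hn.ne']

theorem arensEmbedding_isolated {n m : ℕ} (hn : 0 < n) (hm : 0 < m) :
    arensEmbedding (arensIsolated n m) = stair n m := by
  have : (1 / (n : ℝ)) / (1 / (n * m)) = m := by field_simp
  simp only [arensEmbedding, arensIsolated, arensCode, this]
  simp [hn.ne', hm.ne']

theorem tendsto_arensLimit_val :
    Tendsto (fun k => (arensLimit k).1) atTop (𝓝 arensOrigin.1) :=
  tendsto_one_div_atTop_nhds_zero_nat.prodMk_nhds tendsto_const_nhds

theorem tendsto_arensIsolated_val {n : ℕ} (hn : 0 < n) :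
    Tendsto (fun m => (arensIsolated n m).1) atTop (𝓝 (arensLimit n).1) :=
  tendsto_const_nhds.prodMk_nhds <| tendsto_const_nhds.div_atTop <|
    tendsto_natCast_atTop_atTop.const_mul_atTop (by exact_mod_cast hn)

theorem continuousOn_arensCode (i : Option {n : ℕ // 0 < n}) :
    ContinuousOn arensCode (arensSeq i) := by
  match i with
  | none =>
    refine (continuousOn_insert_range_of_tendsto tendsto_arensLimit_val ?_).mono ?_
    · change Tendsto (fun k => arensEmbedding (arensLimit k)) atTop
        (𝓝 (arensEmbedding arensOrigin))
      refine arensEmbedding_origin ▸ tendsto_stair_top.congr' ?_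
      filter_upwards [eventually_gt_atTop 0] with k hk
      exact (arensEmbedding_limit hk).symm
    · rintro q (rfl | ⟨k, -, rfl⟩)
      exacts [mem_insert _ _, mem_insert_of_mem _ ⟨k, rfl⟩]
  | some ⟨n, hn⟩ =>
    refine (continuousOn_insert_range_of_tendsto (tendsto_arensIsolated_val hn) ?_).mono ?_
    · change Tendsto (fun m => arensEmbedding (arensIsolated n m)) atTop
        (𝓝 (arensEmbedding (arensLimit n)))
      refine arensEmbedding_limit hn ▸ (tendsto_stair n).congr' ?_
      filter_upwards [eventually_gt_atTop 0] with m hm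
      exact (arensEmbedding_isolated hn hm).symm
    · rintro q (rfl | ⟨m, -, rfl⟩)
      exacts [mem_insert _ _, mem_insert_of_mem _ ⟨m, rfl⟩]

theorem continuous_arensEmbedding : Continuous arensEmbedding :=
  continuous_iSup_dom.2 fun i => continuous_coinduced_dom.2 <| by
    let := TopologicalSpace.induced (fun x : {x : ArensS2 // x.1 ∈ arensSeq i} => x.1.1) inferInstance
    exact (continuousOn_arensCode i).comp_continuous continuous_induced_dom fun x => x.2

instance : T0Space ArensS2 :=
  t0Space_of_injective_of_continuous Subtype.val_injective <|
    continuous_iSup_dom.2 fun _ => continuous_coinduced_dom.2 continuous_induced_dom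

theorem ArensS2.tendsto_of_tendsto_val {ι : Type*} {l : Filter ι} {i : Option {n : ℕ // 0 < n}}
    {u : ι → ArensS2} {x : ArensS2} (hu : ∀ k, (u k).1 ∈ arensSeq i) (hx : x.1 ∈ arensSeq i)
    (h : Tendsto (fun k => (u k).1) l (𝓝 x.1)) : Tendsto u l (𝓝 x) := by
  let := TopologicalSpace.induced (fun x : {x : ArensS2 // x.1 ∈ arensSeq i} => x.1.1) inferInstance
  have hincl : Continuous fun x : {x : ArensS2 // x.1 ∈ arensSeq i} => x.1 :=
    continuous_iff_coinduced_le.2 (le_iSup (fun j => TopologicalSpace.coinduced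
      (fun x : {x : ArensS2 // x.1 ∈ arensSeq j} => x.1) _) i)
  refine (hincl.tendsto ⟨x, hx⟩).comp (f := fun k => (⟨u k, hu k⟩ : {x // x.1 ∈ arensSeq i})) ?_
  rw [nhds_induced, tendsto_comap_iff]
  exact h

theorem tendsto_arensLimit : Tendsto arensLimit atTop (𝓝 arensOrigin) :=
  ArensS2.tendsto_of_tendsto_val (i := none) limit_mem_arensC0 (Or.inl rfl) tendsto_arensLimit_val

theorem tendsto_arensIsolated {n : ℕ} (hn : 0 < n) :
    Tendsto (arensIsolated n) atTop (𝓝 (arensLimit n)) :=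
  ArensS2.tendsto_of_tendsto_val (i := some ⟨n, hn⟩) (isolated_mem_arensC n) (Or.inl rfl)
    (tendsto_arensIsolated_val hn)

section Inducing

variable {U : Set ArensS2}

theorem exists_isCompact_eqOn_imp_mem_of_origin (hU : IsOpen U) (hx : arensOrigin ∈ U) :
    ∃ K, IsCompact K ∧ ∀ y, EqOn (arensEmbedding y) (arensEmbedding arensOrigin) K → y ∈ U := by
  obtain ⟨N, hN⟩ := eventually_atTop.1 (tendsto_arensLimit.eventually (hU.mem_nhds hx))
  have hcol : ∀ k, ∃ M, N ≤ k → 0 < k → ∀ m, M ≤ m → arensIsolated k m ∈ U := fun k => by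
    by_cases hk : N ≤ k ∧ 0 < k
    · obtain ⟨M, hM⟩ := eventually_atTop.1
        ((tendsto_arensIsolated hk.2).eventually (hU.mem_nhds (hN k hk.1)))
      exact ⟨M, fun _ _ => hM⟩
    · exact ⟨0, fun h₁ h₂ => absurd ⟨h₁, h₂⟩ hk⟩
  choose M hM using hcol
  refine ⟨insert (some (0, N)) (insert none (range fun k => some (k, M k))),
    (Fan.tendsto_some_none M).isCompact_insert_range.insert _, fun y hy => ?_⟩
  have h₀ := hy (mem_insert _ _)
  induction y using ArensS2.induction with
  | origin => exact hx
  | limit k hk =>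
    simp only [arensEmbedding_limit hk, arensEmbedding_origin, stair_zero] at h₀
    exact hN k (by simpa using h₀)
  | isolated k m hk hm =>
    have h₁ := hy (mem_insert_of_mem _ (mem_insert_of_mem _ ⟨k, rfl⟩))
    simp [arensEmbedding_isolated hk hm, stair_of_ne_zero hk.ne'] at h₀ h₁
    exact hM k h₀ hk m h₁.le

theorem exists_isCompact_eqOn_imp_mem_of_limit {n : ℕ} (hn : 0 < n) (hU : IsOpen U)
    (hx : arensLimit n ∈ U) :
    ∃ K, IsCompact K ∧ ∀ y, EqOn (arensEmbedding y) (arensEmbedding (arensLimit n)) K → y ∈ U := by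
  obtain ⟨M, hM⟩ := eventually_atTop.1 ((tendsto_arensIsolated hn).eventually (hU.mem_nhds hx))
  refine ⟨{some (0, n), some (0, n + 1), some (1, M)}, (toFinite _).isCompact, fun y hy => ?_⟩
  have h₀ := hy (by simp : some (0, n) ∈ _)
  have h₁ := hy (by simp : some (0, n + 1) ∈ _)
  have h₂ := hy (by simp : some (1, M) ∈ _)
  simp only [arensEmbedding_limit hn, stair_zero, stair_of_ne_zero one_ne_zero] at h₀ h₁ h₂
  induction y using ArensS2.induction with
  | origin => simp at h₁
  | limit k hk =>
    simp only [arensEmbedding_limit hk, stair_zero] at h₀ h₁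
    obtain rfl : k = n := by simp at h₀ h₁; omega
    exact hx
  | isolated k m hk hm =>
    simp only [arensEmbedding_isolated hk hm, stair_zero, stair_of_ne_zero one_ne_zero] at h₀ h₁ h₂
    obtain rfl : k = n := by simp at h₀ h₁; omega
    simp [Nat.one_le_of_lt hk] at h₂
    exact hM m h₂.le

theorem exists_isCompact_eqOn_imp_mem_of_isolated {n m : ℕ} (hn : 0 < n) (hm : 0 < m)
    (hx : arensIsolated n m ∈ U) : ∃ K, IsCompact K ∧
      ∀ y, EqOn (arensEmbedding y) (arensEmbedding (arensIsolated n m)) K → y ∈ U := by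
  refine ⟨{some (0, n), some (0, n + 1), some (1, m - 1), some (1, m)}, (toFinite _).isCompact,
    fun y hy => ?_⟩
  have h₀ := hy (by simp : some (0, n) ∈ _)
  have h₁ := hy (by simp : some (0, n + 1) ∈ _)
  have h₂ := hy (by simp : some (1, m - 1) ∈ _)
  have h₃ := hy (by simp : some (1, m) ∈ _)
  simp only [arensEmbedding_isolated hn hm, stair_zero, stair_of_ne_zero one_ne_zero,
    Nat.cast_lt] at h₀ h₁ h₂ h₃
  induction y using ArensS2.induction with
  | origin => simp at h₁
  | limit k hk =>
    simp [arensEmbedding_limit hk, stair_of_ne_zero one_ne_zero,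
      Nat.one_le_of_lt hn] at h₃
  | isolated k l hk hl =>
    simp only [arensEmbedding_isolated hk hl, stair_zero, stair_of_ne_zero one_ne_zero,
      Nat.cast_lt] at h₀ h₁ h₂ h₃
    simp [Nat.one_le_of_lt hn, Nat.one_le_of_lt hk] at h₀ h₁ h₂ h₃
    obtain ⟨rfl, rfl⟩ : k = n ∧ l = m := by omega
    exact hx

end Inducing

theorem isInducing_arensEmbedding : IsInducing arensEmbedding := by
  refine isInducing_iff_nhds.2 fun x =>
    le_antisymm (continuous_arensEmbedding.tendsto x).le_comap fun U hU => ?_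
  obtain ⟨V, hVU, hV, hxV⟩ := mem_nhds_iff.1 hU
  obtain ⟨K, hK, hKV⟩ : ∃ K, IsCompact K ∧
      ∀ y, EqOn (arensEmbedding y) (arensEmbedding x) K → y ∈ V := by
    induction x using ArensS2.induction with
    | origin => exact exists_isCompact_eqOn_imp_mem_of_origin hV hxV
    | limit n hn => exact exists_isCompact_eqOn_imp_mem_of_limit hn hV hxV
    | isolated n m hn hm => exact exists_isCompact_eqOn_imp_mem_of_isolated hn hm hxV
  exact ⟨_, (ContinuousMap.hasBasis_nhds_eqOn _).mem_of_mem hK, fun y hy => hVU (hKV y hy)⟩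

theorem range_arensEmbedding : range arensEmbedding = {g | IsStaircase g} := by
  ext g
  constructor
  · rintro ⟨x, rfl⟩
    induction x using ArensS2.induction with
    | origin => simpa using isStaircase_const
    | limit n hn => simpa [arensEmbedding_limit hn] using isStaircase_stair hn (by simp)
    | isolated n m hn hm =>
      simpa [arensEmbedding_isolated hn hm] using isStaircase_stair hn (by exact_mod_cast hm)
  · intro hg
    obtain rfl | ⟨n, b, hn, hb, rfl⟩ := IsStaircase.eq_const_or_stair hg
    · exact ⟨_, arensEmbedding_origin⟩
    · cases b using ENat.recTopCoe with
      | top => exact ⟨_, arensEmbedding_limit hn⟩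
      | coe m => exact ⟨_, arensEmbedding_isolated hn (by exact_mod_cast hb)⟩

theorem stmt2 :
    ∃ e : ArensS2 → C(Fan, Bool), Topology.IsClosedEmbedding e :=
  ⟨arensEmbedding, ⟨isInducing_arensEmbedding, isInducing_arensEmbedding.injective⟩,
    range_arensEmbedding ▸ isClosed_setOf_isStaircase⟩
end

section
/- If every point of a topological space Z is a regular G_δ point (i.e., {z} = ⋂_n cl(U_n) for some open neighborhoods U_n of z), and Z contains a topological copy of the Arens space S₂, then Z contains a closed topological copy of S₂. -/
/-!
Regular `G_δ` points make `Z` Hausdorff. Let `p = e (0,0)` with `{p} = ⋂ cl Uₙ`. The `k`-th branch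
of the copy converges to `e (1/k, 0)`, and `e (1/k, 0) → p`. Replacing each branch by a sparse
subsequence `m ↦ cₖ m` (a reparametrisation that is a self-embedding of `S₂`), the `k`-th branch lies
in every `Uₙ` with `n ≤ k` that contains `e (1/k, 0)`, hence eventually in each `Uₙ`. The new copy
is then a union of compact branches whose only possible extra accumulation points lie in
`⋂ cl Uₙ = {p}`, so it is closed.
-/

open Filter Topology Set Function

theorem isOpen_iff_of_tendsto_of_surjective {Y : Type*} [TopologicalSpace Y] [T2Space Y]
    {x : ℕ → Y} {a : Y} (hx : Tendsto x atTop (𝓝 a)) (hsurj : Surjective x) {A : Set Y} :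
    IsOpen A ↔ (a ∈ A → ∀ᶠ n in atTop, x n ∈ A) := by
  refine ⟨fun hA ha => hx (hA.mem_nhds ha), fun h => ?_⟩
  rw [← isClosed_compl_iff]
  by_cases ha : a ∈ A
  · obtain ⟨N, hN⟩ := eventually_atTop.mp (h ha)
    refine ((finite_Iio N).image x |>.subset ?_).isClosed
    intro y hy
    obtain ⟨n, rfl⟩ := hsurj y
    exact ⟨n, mem_Iio.mpr (not_le.mp fun hn => hy (hN n hn)), rfl⟩
  · -- `Aᶜ` is a subsequence of `x` together with its limit `a`, hence compact
    have hS : Tendsto (fun n : {n // x n ∉ A} => x n) cofinite (𝓝 a) :=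
      (Nat.cofinite_eq_atTop ▸ hx).comp Subtype.val_injective.tendsto_cofinite
    convert hS.isCompact_insert_range_of_cofinite.isClosed using 1
    ext y
    obtain ⟨n, rfl⟩ := hsurj y
    constructor
    · exact fun hn => .inr ⟨⟨n, hn⟩, rfl⟩
    · rintro (hn | ⟨⟨m, hm⟩, hmn⟩)
      · exact hn ▸ ha
      · exact hmn ▸ hm

theorem t2Space_of_singleton_eq_iInter_closure {Z : Type*} [TopologicalSpace Z]
    (h : ∀ z : Z, ∃ U : ℕ → Set Z,
      (∀ n, IsOpen (U n) ∧ z ∈ U n) ∧ ({z} : Set Z) = ⋂ n, closure (U n)) :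
    T2Space Z := by
  refine ⟨fun x y hxy => ?_⟩
  obtain ⟨U, hU, hxU⟩ := h x
  obtain ⟨n, hn⟩ : ∃ n, y ∉ closure (U n) := by
    have : y ∉ ⋂ n, closure (U n) := hxU ▸ hxy.symm
    simpa using this
  exact ⟨U n, (closure (U n))ᶜ, (hU n).1, isClosed_closure.isOpen_compl, (hU n).2, hn,
    disjoint_compl_right_iff_subset.mpr subset_closure⟩

theorem isClosed_iUnion_of_eventually_subset {X : Type*} [TopologicalSpace X]
    {B U : ℕ → Set X} (hB : ∀ k, IsClosed (B k)) (hBU : ∀ n, ∀ᶠ k in atTop, B k ⊆ U n)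
    (hU : ⋂ n, closure (U n) ⊆ ⋃ k, B k) : IsClosed (⋃ k, B k) := by
  refine isClosed_of_closure_subset fun w hw => ?_
  by_cases hwU : w ∈ ⋂ n, closure (U n)
  · exact hU hwU
  obtain ⟨n, hn⟩ : ∃ n, w ∉ closure (U n) := by simpa using hwU
  obtain ⟨J, hJ⟩ := eventually_atTop.mp (hBU n)
  have hsplit : ⋃ k, B k ⊆ (⋃ j ∈ Iio J, B j) ∪ U n := by
    refine iUnion_subset fun k => ?_
    rcases lt_or_ge k J with hk | hk
    · exact (subset_biUnion_of_mem (u := B) (mem_Iio.mpr hk)).trans subset_union_left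
    · exact (hJ k hk).trans subset_union_right
  have hhead : IsClosed (⋃ j ∈ Iio J, B j) := (finite_Iio J).isClosed_biUnion fun j _ => hB j
  have hw' := closure_mono hsplit hw
  rw [closure_union] at hw'
  rcases hw' with hw | hw
  · exact iUnion₂_subset_iUnion _ _ (hhead.closure_subset hw)
  · exact absurd hw hn

lemma mem_arensC0_iff {p : ℝ × ℝ} : p ∈ arensC0 ↔ ∃ n : ℕ, p = (1 / (n : ℝ), 0) := by
  constructor
  · rintro (h | ⟨n, -, rfl⟩)
    · exact ⟨0, by simpa using h⟩
    · exact ⟨n, rfl⟩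
  · rintro ⟨n, rfl⟩
    rcases Nat.eq_zero_or_pos n with rfl | hn
    · left; simp
    · exact Or.inr ⟨n, hn, rfl⟩

lemma mem_arensC_iff {k : ℕ} {p : ℝ × ℝ} :
    p ∈ arensC k ↔ ∃ m : ℕ, p = (1 / (k : ℝ), 1 / ((k : ℝ) * m)) := by
  constructor
  · rintro (h | ⟨m, -, rfl⟩)
    · exact ⟨0, by simpa using h⟩
    · exact ⟨m, rfl⟩
  · rintro ⟨m, rfl⟩
    rcases Nat.eq_zero_or_pos m with rfl | hm
    · left; simp
    · exact Or.inr ⟨m, hm, rfl⟩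

lemma mem_arensCarrier_iff {p : ℝ × ℝ} :
    p ∈ arensCarrier ↔ ∃ k m : ℕ, p = (1 / (k : ℝ), 1 / ((k : ℝ) * m)) := by
  constructor
  · rintro (h | h)
    · obtain ⟨n, rfl⟩ := mem_arensC0_iff.mp h
      exact ⟨n, 0, by simp⟩
    · obtain ⟨k, -, hk⟩ := mem_iUnion₂.mp h
      exact ⟨k, mem_arensC_iff.mp hk⟩
  · rintro ⟨k, m, rfl⟩
    rcases Nat.eq_zero_or_pos k with rfl | hk
    · exact Or.inl (mem_arensC0_iff.mpr ⟨0, by simp⟩)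
    · exact Or.inr (mem_biUnion hk (mem_arensC_iff.mpr ⟨m, rfl⟩))

namespace ArensS2

/-- `pt k m` is the point `(1/k, 1/(km))`; Lean's `1/0 = 0` makes `pt 0 m` the base point `(0,0)`
and `pt k 0` the limit `(1/k, 0)` of the `k`-th branch. -/
noncomputable def pt (k m : ℕ) : ArensS2 := ⟨_, mem_arensCarrier_iff.mpr ⟨k, m, rfl⟩⟩

protected lemma ext_iff {x y : ArensS2} : x = y ↔ x.1 = y.1 := Subtype.ext_iff

lemma val_pt (k m : ℕ) : (pt k m).1 = (1 / (k : ℝ), 1 / ((k : ℝ) * m)) := rfl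

lemma surjective_pt : Surjective fun i : ℕ × ℕ => pt i.1 i.2 := fun x => by
  obtain ⟨k, m, h⟩ := mem_arensCarrier_iff.mp x.2
  exact ⟨(k, m), ArensS2.ext_iff.mpr h.symm⟩

lemma pt_eq_pt_iff {k k' m m' : ℕ} : pt k m = pt k' m' ↔ k = k' ∧ (k = 0 ∨ m = m') := by
  rw [ArensS2.ext_iff, val_pt, val_pt, Prod.mk.injEq]
  simp only [one_div, inv_inj, Nat.cast_inj]
  constructor
  · rintro ⟨rfl, h⟩
    norm_cast at h
    exact ⟨rfl, by simpa [or_comm] using h⟩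
  · rintro ⟨rfl, rfl | rfl⟩ <;> simp

lemma pt_zero_left (m : ℕ) : pt 0 m = pt 0 0 := pt_eq_pt_iff.mpr ⟨rfl, .inl rfl⟩

-- `IsOpen[...]` is the topology of one summand in the definition of the Arens topology.
lemma isOpen_planar_preimage_iff {s : Set (ℝ × ℝ)} {x : ℕ → ArensS2} (hxs : ∀ n, (x n).1 ∈ s)
    (hsurj : ∀ y : ArensS2, y.1 ∈ s → ∃ n, x n = y)
    (hx : Tendsto (fun n => (x n).1) atTop (𝓝 (x 0).1)) {V : Set ArensS2} :
    IsOpen[.induced (fun y : {y : ArensS2 // y.1 ∈ s} => y.1.1) inferInstance]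
        (Subtype.val ⁻¹' V) ↔ (x 0 ∈ V → ∀ᶠ n in atTop, x n ∈ V) := by
  let _ : TopologicalSpace {y : ArensS2 // y.1 ∈ s} := .induced (fun y => y.1.1) inferInstance
  have hemb : IsEmbedding fun y : {y : ArensS2 // y.1 ∈ s} => y.1.1 :=
    ⟨⟨rfl⟩, fun y y' h => Subtype.ext (Subtype.ext h)⟩
  have := hemb.t2Space
  let x' : ℕ → {y : ArensS2 // y.1 ∈ s} := fun n => ⟨x n, hxs n⟩
  refine isOpen_iff_of_tendsto_of_surjective (x := x')
    (hemb.tendsto_nhds_iff (f := x') (y := x' 0) |>.mpr hx) fun y => ?_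
  obtain ⟨n, hn⟩ := hsurj y.1 y.2
  exact ⟨n, Subtype.ext hn⟩

lemma tendsto_val_pt_zero :
    Tendsto (fun k => (pt k 0).1) atTop (𝓝 (pt 0 0).1) := by
  simpa [val_pt] using (tendsto_one_div_atTop_nhds_zero_nat (𝕜 := ℝ)).prodMk_nhds
    (tendsto_const_nhds (x := (0 : ℝ)))

lemma tendsto_val_pt (k : ℕ) : Tendsto (fun m => (pt k m).1) atTop (𝓝 (pt k 0).1) := by
  have h := (tendsto_const_nhds (x := 1 / (k : ℝ))).mul
    (tendsto_one_div_atTop_nhds_zero_nat (𝕜 := ℝ))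
  simp only [one_div_mul_one_div, mul_zero] at h
  simpa [val_pt] using (tendsto_const_nhds (x := 1 / (k : ℝ))).prodMk_nhds h

theorem isOpen_iff {V : Set ArensS2} :
    IsOpen V ↔ (pt 0 0 ∈ V → ∀ᶠ k in atTop, pt k 0 ∈ V) ∧
      ∀ k, pt k 0 ∈ V → ∀ᶠ m in atTop, pt k m ∈ V := by
  have hC0 := isOpen_planar_preimage_iff (s := arensC0) (x := fun k => pt k 0)
    (fun k => mem_arensC0_iff.mpr ⟨k, by simp [val_pt]⟩)
    (fun y hy => by
      obtain ⟨k, hk⟩ := mem_arensC0_iff.mp hy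
      exact ⟨k, ArensS2.ext_iff.mpr (by simp [val_pt, hk])⟩)
    tendsto_val_pt_zero (V := V)
  have hC : ∀ k, 0 < k → _ := fun k (hk : 0 < k) =>
    isOpen_planar_preimage_iff (s := arensC k) (x := pt k)
    (fun m => mem_arensC_iff.mpr ⟨m, rfl⟩)
    (fun y hy => by
      obtain ⟨m, hm⟩ := mem_arensC_iff.mp hy
      exact ⟨m, ArensS2.ext_iff.mpr hm.symm⟩)
    (tendsto_val_pt k) (V := V)
  rw [isOpen_iSup_iff, Option.forall]
  simp only [isOpen_coinduced]
  refine and_congr hC0 ⟨fun h k => ?_, fun h k => (hC k k.2).mpr (h k)⟩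
  rcases Nat.eq_zero_or_pos k with rfl | hk
  · exact fun _ => .of_forall fun m => pt_zero_left m ▸ ‹_›
  · exact (hC k hk).mp (h ⟨k, hk⟩)

theorem tendsto_pt_zero : Tendsto (fun k => pt k 0) atTop (𝓝 (pt 0 0)) :=
  tendsto_nhds.mpr fun _ hV h0 => (isOpen_iff.mp hV).1 h0

theorem tendsto_pt (k : ℕ) : Tendsto (pt k) atTop (𝓝 (pt k 0)) :=
  tendsto_nhds.mpr fun _ hV hk => (isOpen_iff.mp hV).2 k hk

theorem continuous_of_tendsto {X : Type*} [TopologicalSpace X] {f : ArensS2 → X}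
    (h₀ : Tendsto (fun k => f (pt k 0)) atTop (𝓝 (f (pt 0 0))))
    (h : ∀ k, Tendsto (fun m => f (pt k m)) atTop (𝓝 (f (pt k 0)))) : Continuous f :=
  continuous_def.mpr fun _ hV => isOpen_iff.mpr
    ⟨fun h0 => h₀ (hV.mem_nhds h0), fun k hk => h k (hV.mem_nhds hk)⟩

lemma iUnion_range_pt : ⋃ k, range (pt k) = univ :=
  eq_univ_of_forall fun x => by
    obtain ⟨⟨k, m⟩, rfl⟩ := surjective_pt x
    exact mem_iUnion.mpr ⟨k, m, rfl⟩

lemma isCompact_range_pt (k : ℕ) : IsCompact (range (pt k)) := by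
  simpa [insert_eq_of_mem (mem_range_self 0)] using (tendsto_pt k).isCompact_insert_range

lemma exists_mul_pt_mem {O : ℕ → Set ArensS2} (hO : ∀ k, O k ∈ 𝓝 (pt k 0)) :
    ∃ c : ℕ → ℕ, (∀ k, 0 < c k) ∧ ∀ k m, pt k (c k * m) ∈ O k := by
  choose N hN using fun k => eventually_atTop.mp (tendsto_pt k (hO k))
  refine ⟨fun k => N k + 1, fun k => Nat.succ_pos _, fun k m => ?_⟩
  rcases Nat.eq_zero_or_pos m with rfl | hm
  · exact mem_of_mem_nhds (hO k)
  · exact hN k _ (Nat.le_mul_of_pos_right _ hm |>.trans' (Nat.le_succ _))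

noncomputable def index : ArensS2 → ℕ × ℕ := surjInv surjective_pt

lemma pt_index (x : ArensS2) : pt (index x).1 (index x).2 = x := surjInv_eq surjective_pt x

noncomputable def mapBranches (φ : ℕ → ℕ → ℕ) (x : ArensS2) : ArensS2 :=
  pt (index x).1 (φ (index x).1 (index x).2)

lemma mapBranches_pt (φ : ℕ → ℕ → ℕ) (k m : ℕ) : mapBranches φ (pt k m) = pt k (φ k m) := by
  obtain ⟨hk, h | hm⟩ := pt_eq_pt_iff.mp (pt_index (pt k m)) <;> rw [mapBranches, hk]
  · rw [hk] at h
    rw [h, pt_zero_left, pt_zero_left (φ 0 m)]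
  · rw [hm]

lemma continuous_mapBranches {φ : ℕ → ℕ → ℕ} (hφ₀ : ∀ k, φ k 0 = 0)
    (hφ : ∀ k, Tendsto (φ k) atTop atTop) : Continuous (mapBranches φ) := by
  refine continuous_of_tendsto ?_ fun k => ?_ <;> simp only [mapBranches_pt, hφ₀]
  · exact tendsto_pt_zero
  · exact (tendsto_pt k).comp (hφ k)

theorem isEmbedding_mapBranches_mul {c : ℕ → ℕ} (hc : ∀ k, 0 < c k) :
    IsEmbedding (mapBranches fun k m => c k * m) := by
  have hinv : LeftInverse (mapBranches fun k n => n / c k) (mapBranches fun k m => c k * m) := by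
    intro x
    obtain ⟨⟨k, m⟩, rfl⟩ := surjective_pt x
    simp only [mapBranches_pt, Nat.mul_div_cancel_left m (hc k)]
  refine hinv.isEmbedding (continuous_mapBranches (fun k => Nat.zero_div _)
    fun k => Nat.tendsto_div_const_atTop (hc k).ne')
    (continuous_mapBranches (fun k => mul_zero _) fun k => tendsto_id.const_mul_atTop' (hc k))

end ArensS2

open ArensS2

theorem stmt3 {Z : Type*} [TopologicalSpace Z]
    (hGδ : ∀ z : Z, ∃ U : ℕ → Set Z,
      (∀ n, IsOpen (U n) ∧ z ∈ U n) ∧ ({z} : Set Z) = ⋂ n, closure (U n))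
    (hcopy : ∃ e : ArensS2 → Z, Topology.IsEmbedding e) :
    ∃ e : ArensS2 → Z, Topology.IsClosedEmbedding e := by
  have := t2Space_of_singleton_eq_iInter_closure hGδ
  obtain ⟨e, he⟩ := hcopy
  obtain ⟨U, hU, hUe⟩ := hGδ (e (pt 0 0))
  let O k := ⋂ n ∈ {n | n ≤ k ∧ e (pt k 0) ∈ U n}, U n
  have hO k : e ⁻¹' O k ∈ 𝓝 (pt k 0) := he.continuous.continuousAt.preimage_mem_nhds <|
    ((finite_Iic k).subset fun n hn => hn.1).isOpen_biInter (fun n _ => (hU n).1)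
      |>.mem_nhds (mem_iInter₂.mpr fun n hn => hn.2)
  obtain ⟨c, hc, hcO⟩ := exists_mul_pt_mem hO
  let f := e ∘ mapBranches fun k m => c k * m
  have hf k m : f (pt k m) = e (pt k (c k * m)) := congrArg e (mapBranches_pt _ k m)
  have hfemb : IsEmbedding f := he.comp (isEmbedding_mapBranches_mul hc)
  refine ⟨f, .mk hfemb ?_⟩
  rw [← image_univ, ← iUnion_range_pt, image_iUnion]
  refine isClosed_iUnion_of_eventually_subset (U := U)
    (fun k => ((isCompact_range_pt k).image hfemb.continuous).isClosed) (fun n => ?_) ?_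
  · filter_upwards [(he.continuous.tendsto _).comp tendsto_pt_zero ((hU n).1.mem_nhds (hU n).2),
      eventually_ge_atTop n] with k hkU hnk
    rintro _ ⟨_, ⟨m, rfl⟩, rfl⟩
    exact hf k m ▸ mem_iInter₂.mp (hcO k m) n ⟨hnk, hkU⟩
  · rw [← hUe, singleton_subset_iff]
    exact mem_iUnion.mpr ⟨0, pt 0 0, mem_range_self 0, by rw [hf, mul_zero]⟩
end

section
/- If Y is a closed subspace of a metrizable space X, then there is a linear extender e : C(Y) → C(X) (assigning to each continuous real-valued function on Y a continuous extension to X) which is a topological embedding when both spaces carry the compact-open topology. -/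
/-!
Dugundji's construction. Cover `Yᶜ` by the balls `B(c, d(c, Y)/2)`, take a partition of unity
`(φ_c)` subordinate to it and points `p_c ∈ Y` with `d(c, p_c) < 2 d(c, Y)`, and put
`e f = ∑ φ_c · f(p_c)` off `Y`. Every `z` in the support of `φ_c` satisfies
`d(z, p_c) ≤ 5 d(z, Y)`, which gives continuity of `e f` at the points of `Y`. The same estimate
shows that for compact `K ⊆ X` the nodes `p_c` used on `K`, together with `K ∩ Y`, form a
compact subset of `Y` on which `|f|` bounds `|e f|` over `K`; so `e` is continuous for the
compact-open topologies, and restriction to `Y` is a continuous left inverse of it.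
-/

open Set Function Metric Topology Filter TopologicalSpace NNReal

theorem PartitionOfUnity.dist_finsum_smul_le {ι S E : Type*} [TopologicalSpace S] {s : Set S}
    [SeminormedAddCommGroup E] [NormedSpace ℝ E] (ρ : PartitionOfUnity ι S s) {x : S}
    (hx : x ∈ s) {g : ι → E} {b : E} {M : ℝ} (hg : ∀ i, ρ i x ≠ 0 → dist (g i) b ≤ M) :
    dist (∑ᶠ i, ρ i x • g i) b ≤ M :=
  ρ.finsum_smul_mem_convex (g := fun i _ => g i) hx (fun i hi => mem_closedBall.2 (hg i hi))
    (convex_closedBall b M)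

theorem PartitionOfUnity.hasFiniteSupport_smul {ι S M : Type*} [TopologicalSpace S] {s : Set S}
    [AddCommMonoid M] [Module ℝ M] (ρ : PartitionOfUnity ι S s) (x : S) (g : ι → M) :
    HasFiniteSupport fun i => ρ i x • g i :=
  (ρ.locallyFinite.point_finite x).subset (support_smul_subset_left (fun i => ρ i x) g)

section

variable {X : Type*} [MetricSpace X]

/-- The weights and nodes of Dugundji's extension formula `e f = ∑ᵢ weights i • f (center i)`
on `Yᶜ`. -/
structure DugundjiSystem (ι : Type*) (Y : Set X) where
  weights : PartitionOfUnity ι (Yᶜ : Set X)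
  center : ι → Y
  C : ℝ≥0
  dist_center_le : ∀ i, ∀ z ∈ tsupport (weights i),
    dist (z : X) (center i) ≤ C * infDist (z : X) Y

namespace DugundjiSystem

variable {ι : Type*} {Y : Set X} (D : DugundjiSystem ι Y)

theorem dist_center_le_of_mem {i : ι} {z : (Yᶜ : Set X)} (hz : z ∈ tsupport (D.weights i))
    {y : X} (hy : y ∈ Y) : dist (D.center i : X) y ≤ (D.C + 1) * dist (z : X) y := by
  have := (D.dist_center_le i z hz).trans
    (mul_le_mul_of_nonneg_left (infDist_le_dist_of_mem hy) D.C.coe_nonneg)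
  linarith [dist_triangle_left (D.center i : X) y z]

theorem isClosed (D : DugundjiSystem ι Y) : IsClosed Y := by
  refine closure_subset_iff_isClosed.1 fun x hx => by_contra fun hxY => ?_
  obtain ⟨i, hi⟩ : ∃ i, D.weights i ⟨x, hxY⟩ ≠ 0 := by
    by_contra! h
    simpa [finsum_eq_zero_of_forall_eq_zero h] using D.weights.sum_eq_one (mem_univ ⟨x, hxY⟩)
  have := D.dist_center_le i _ (subset_tsupport _ hi)
  rw [(mem_closure_iff_infDist_zero ⟨_, (D.center i).2⟩).1 hx, mul_zero,
    dist_le_zero] at this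
  exact hxY ((show x = D.center i from this) ▸ (D.center i).2)

open scoped Classical in
noncomputable def extend (f : C(Y, ℝ)) (x : X) : ℝ :=
  if hx : x ∈ Y then f ⟨x, hx⟩ else ∑ᶠ i, D.weights i ⟨x, hx⟩ • f (D.center i)

theorem extend_of_mem (f : C(Y, ℝ)) {x : X} (hx : x ∈ Y) : D.extend f x = f ⟨x, hx⟩ :=
  dif_pos hx

theorem extend_of_notMem (f : C(Y, ℝ)) {x : X} (hx : x ∉ Y) :
    D.extend f x = ∑ᶠ i, D.weights i ⟨x, hx⟩ • f (D.center i) :=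
  dif_neg hx

theorem continuousAt_extend_of_mem (f : C(Y, ℝ)) {x : X} (hx : x ∈ Y) :
    ContinuousAt (D.extend f) x := by
  refine Metric.continuousAt_iff.2 fun ε hε => ?_
  obtain ⟨δ, hδ, hfδ⟩ := Metric.continuousAt_iff.1 (f.continuous.continuousAt (x := ⟨x, hx⟩))
    (ε / 2) (half_pos hε)
  have hC : (0 : ℝ) < D.C + 1 := by positivity
  refine ⟨δ / (D.C + 1), div_pos hδ hC, fun {z} hz => ?_⟩
  rw [D.extend_of_mem f hx]
  by_cases hzY : z ∈ Y
  · rw [D.extend_of_mem f hzY]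
    refine (hfδ ?_).trans (half_lt_self hε)
    exact hz.trans_le (div_le_self hδ.le (by simp))
  · rw [D.extend_of_notMem f hzY]
    refine (D.weights.dist_finsum_smul_le (mem_univ _) fun i hi => (hfδ ?_).le).trans_lt
      (half_lt_self hε)
    calc dist (D.center i : X) x ≤ (D.C + 1) * dist z x :=
          D.dist_center_le_of_mem (subset_tsupport _ hi) hx
      _ < δ := (lt_div_iff₀' hC).1 hz

theorem continuousOn_extend_compl (f : C(Y, ℝ)) : ContinuousOn (D.extend f) Yᶜ := by
  rw [continuousOn_iff_continuous_domRestrict]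
  have : Yᶜ.domRestrict (D.extend f) =
      fun z : (Yᶜ : Set X) => ∑ᶠ i, D.weights i z • f (D.center i) :=
    funext fun z => D.extend_of_notMem f z.2
  rw [this]
  exact D.weights.continuous_finsum_smul fun i _ _ => continuousAt_const

theorem continuous_extend (f : C(Y, ℝ)) : Continuous (D.extend f) := by
  refine continuous_iff_continuousAt.2 fun x => ?_
  by_cases hx : x ∈ Y
  · exact D.continuousAt_extend_of_mem f hx
  · exact (D.continuousOn_extend_compl f).continuousAt (D.isClosed.isOpen_compl.mem_nhds hx)

noncomputable def extendₗ : C(Y, ℝ) →ₗ[ℝ] C(X, ℝ) where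
  toFun f := ⟨D.extend f, D.continuous_extend f⟩
  map_add' f g := by
    ext x
    by_cases hx : x ∈ Y
    · simp [D.extend_of_mem _ hx]
    · simp only [ContinuousMap.coe_mk, ContinuousMap.add_apply, D.extend_of_notMem _ hx,
        smul_add]
      exact finsum_add_distrib (D.weights.hasFiniteSupport_smul _ _)
        (D.weights.hasFiniteSupport_smul _ _)
  map_smul' r f := by
    ext x
    by_cases hx : x ∈ Y
    · simp [D.extend_of_mem _ hx]
    · simp only [ContinuousMap.coe_mk, ContinuousMap.smul_apply, RingHom.id_apply,
        D.extend_of_notMem _ hx, smul_finsum, smul_comm r]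

theorem extendₗ_apply (f : C(Y, ℝ)) (y : Y) : D.extendₗ f y = f y :=
  D.extend_of_mem f y.2

/-- The points of `Y` on which the values of `D.extend f` on `K` depend. -/
def shadow (K : Set X) : Set Y :=
  Subtype.val ⁻¹' K ∪ D.center '' {i | ∃ z ∈ tsupport (D.weights i), (z : X) ∈ K}

theorem abs_extend_le (f : C(Y, ℝ)) {K : Set X} {x : X} (hx : x ∈ K) {M : ℝ}
    (hM : ∀ y ∈ D.shadow K, |f y| ≤ M) : |D.extend f x| ≤ M := by
  by_cases hxY : x ∈ Y
  · rw [D.extend_of_mem f hxY]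
    exact hM _ (Or.inl hx)
  · rw [D.extend_of_notMem f hxY, ← Real.dist_0_eq_abs]
    refine D.weights.dist_finsum_smul_le (mem_univ _) fun i hi => ?_
    rw [Real.dist_0_eq_abs]
    exact hM _ (Or.inr ⟨i, ⟨_, subset_tsupport _ hi, hx⟩, rfl⟩)

theorem exists_witness_of_mem_shadow {K : Set X} {y : Y} (hy : y ∈ D.shadow K) :
    ∃ z ∈ K, dist (y : X) z ≤ D.C * infDist z Y ∧
      ∀ hz : z ∉ Y, ∃ i, y = D.center i ∧ ⟨z, hz⟩ ∈ tsupport (D.weights i) := by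
  rcases hy with hyK | ⟨i, ⟨z, hz, hzK⟩, rfl⟩
  · exact ⟨y, hyK, by simp [infDist_zero_of_mem y.2], fun h => (h y.2).elim⟩
  · exact ⟨z, hzK, dist_comm (z : X) _ ▸ D.dist_center_le i z hz, fun _ => ⟨i, rfl, hz⟩⟩

theorem isCompact_shadow {K : Set X} (hK : IsCompact K) : IsCompact (D.shadow K) := by
  refine isCompact_iff_isSeqCompact.2 fun u hu => ?_
  choose z hzK hdist hcenter using fun n => D.exists_witness_of_mem_shadow (hu n)
  obtain ⟨a, haK, φ, hφ, hza⟩ := hK.tendsto_subseq hzK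
  by_cases ha : a ∈ Y
  · refine ⟨⟨a, ha⟩, Or.inl haK, φ, hφ, tendsto_iff_dist_tendsto_zero.2 ?_⟩
    refine squeeze_zero (fun _ => dist_nonneg) (fun n => ?_)
      (by simpa using (tendsto_iff_dist_tendsto_zero.1 hza).const_mul (D.C + 1 : ℝ))
    have hinf :=
      mul_le_mul_of_nonneg_left (infDist_le_dist_of_mem (x := z (φ n)) ha) D.C.coe_nonneg
    have := dist_triangle (u (φ n) : X) (z (φ n)) a
    show dist (u (φ n) : X) a ≤ (D.C + 1) * dist (z (φ n)) a
    linarith [hdist (φ n)]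
  · -- only finitely many supports meet a neighbourhood of `a ∉ Y`, so eventually `u ∘ φ`
    -- takes values in a finite set
    obtain ⟨V, hV, hVfin⟩ := D.weights.locallyFinite_tsupport ⟨a, ha⟩
    obtain ⟨W, hW, hWV⟩ := (mem_nhds_subtype _ _ _).1 hV
    have hev : ∀ᶠ n in atTop, u (φ n) ∈
        D.shadow K ∩ D.center '' {i | (tsupport (D.weights i) ∩ V).Nonempty} := by
      filter_upwards [hza (inter_mem hW (D.isClosed.isOpen_compl.mem_nhds ha))] with n hn
      obtain ⟨i, hi, hzi⟩ := hcenter (φ n) hn.2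
      exact ⟨hu _, i, ⟨_, hzi, hWV hn.1⟩, hi.symm⟩
    obtain ⟨b, hb, ψ, hψ, hub⟩ :=
      ((hVfin.image D.center).inter_of_right _).isCompact.tendsto_subseq' hev.frequently
    exact ⟨b, hb.1, φ ∘ ψ, hφ.comp hψ, hub⟩

theorem continuous_extendₗ : Continuous D.extendₗ := by
  refine continuous_of_continuousAt_zero D.extendₗ ?_
  rw [ContinuousAt, map_zero, ContinuousMap.tendsto_iff_forall_isCompact_tendstoUniformlyOn]
  intro K hK
  have h0 := ContinuousMap.tendsto_iff_forall_isCompact_tendstoUniformlyOn.1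
    (tendsto_id (x := 𝓝 (0 : C(Y, ℝ)))) _ (D.isCompact_shadow hK)
  rw [Metric.tendstoUniformlyOn_iff] at h0 ⊢
  intro ε hε
  filter_upwards [h0 (ε / 2) (half_pos hε)] with f hf x hx
  have := D.abs_extend_le f hx fun y hy => by simpa using (hf y hy).le
  simp only [ContinuousMap.zero_apply, dist_zero_left, Real.norm_eq_abs]
  exact this.trans_lt (half_lt_self hε)

theorem isEmbedding_extendₗ : IsEmbedding D.extendₗ := by
  refine IsEmbedding.of_comp D.continuous_extendₗ (ContinuousMap.continuous_restrict Y) ?_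
  convert IsEmbedding.id
  ext f y
  exact D.extendₗ_apply f y

end DugundjiSystem

theorem exists_dugundjiSystem {Y : Set X} (hY : IsClosed Y) (hne : Y.Nonempty) :
    Nonempty (DugundjiSystem (Yᶜ : Set X) Y) := by
  have hpos (c : (Yᶜ : Set X)) : 0 < infDist (c : X) Y := (hY.notMem_iff_infDist_pos hne).1 c.2
  obtain ⟨ρ, hρ⟩ := PartitionOfUnity.exists_isSubordinate isClosed_univ
    (fun c : (Yᶜ : Set X) => Subtype.val ⁻¹' ball (c : X) (infDist (c : X) Y / 2))
    (fun c => isOpen_ball.preimage continuous_subtype_val)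
    (fun c _ => mem_iUnion.2 ⟨c, by simpa using hpos c⟩)
  choose p hpY hpd using fun c => (infDist_lt_iff hne).1 (lt_two_mul_self (hpos c))
  refine ⟨⟨ρ, fun c => ⟨p c, hpY c⟩, 5, fun c z hz => ?_⟩⟩
  -- on `B(c, d(c, Y)/2)`: `d(c, Y) < 2 d(z, Y)` and `d(z, p c) < (1/2 + 2) d(c, Y) < 5 d(z, Y)`
  have hzc : dist (z : X) c < infDist (c : X) Y / 2 := hρ c hz
  have := infDist_le_infDist_add_dist (x := (c : X)) (y := (z : X)) (s := Y)
  have := dist_triangle (z : X) c (p c)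
  push_cast
  linarith [hpd c, dist_comm (z : X) c]

end

theorem stmt6 {X : Type*} [TopologicalSpace X] [TopologicalSpace.MetrizableSpace X]
    (Y : Set X) (hY : IsClosed Y) :
    ∃ e : C(Y, ℝ) →ₗ[ℝ] C(X, ℝ),
      (∀ (f : C(Y, ℝ)) (y : Y), e f y = f y) ∧
      Topology.IsEmbedding (fun f : C(Y, ℝ) => e f) := by
  let : MetricSpace X := TopologicalSpace.metrizableSpaceMetric X
  rcases Y.eq_empty_or_nonempty with rfl | hne
  · exact ⟨0, fun f y => y.2.elim, .of_subsingleton _⟩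
  · obtain ⟨D⟩ := exists_dugundjiSystem hY hne
    exact ⟨D.extendₗ, D.extendₗ_apply, D.isEmbedding_extendₗ⟩
end

section
/- For a zero-dimensional first countable topological space X, the space C_k(X,2) of continuous {0,1}-valued functions with the compact-open topology is metrizable if and only if X is locally compact and σ-compact. -/
open Filter Set Topology TopologicalSpace Uniformity

/-!
If `C(X, Bool)` is first countable at `0`, the basic neighbourhoods `{g | g = 0 on K}`, `K`
compact, have a countable cofinal subfamily indexed by compacts `L n`. The indicator of the
complement of a clopen `C ⊇ L n` vanishes on `L n`, so every compact set lies in the clopen hull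
(intersection of all clopen supersets) of some `L n`; in a zero-dimensional space the clopen hull
of a compact set is again compact (it need not equal the set, as `X` is not assumed `T₀`). So `X`
is hemicompact, and a first countable hemicompact space is locally compact: otherwise a sequence
`yₙ → x` escaping `S₀ ∪ ⋯ ∪ Sₙ` gives a compact set `{x} ∪ {yₙ}` contained in no `Sₙ`.
The converse is the standard metrizability of `C(X, Y)` for locally compact σ-compact `X`.
-/

theorem ContinuousMap.hasBasis_nhds_eqOn_s11 {X Y : Type*} [TopologicalSpace X] [UniformSpace Y]
    [DiscreteUniformity Y] (f : C(X, Y)) :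
    (𝓝 f).HasBasis IsCompact fun K ↦ {g | EqOn g f K} := by
  have hY : (𝓤 Y).HasBasis (fun _ : Unit ↦ True) fun _ ↦ SetRel.id := by
    rw [DiscreteUniformity.eq_principal_setRelId]
    exact hasBasis_principal _
  refine (nhds_basis_uniformity hY.compactConvergenceUniformity).to_hasBasis
    (fun p hp ↦ ⟨p.1, hp.1, fun g hg x hx ↦ hg hx⟩)
    (fun K hK ↦ ⟨(K, ()), ⟨hK, trivial⟩, fun g hg x hx ↦ hg x hx⟩)

section Hemicompact

variable {X : Type*} [TopologicalSpace X]

def IsHemicompact (X : Type*) [TopologicalSpace X] : Prop :=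
  ∃ S : ℕ → Set X, (∀ n, IsCompact (S n)) ∧ ∀ K, IsCompact K → ∃ n, K ⊆ S n

theorem IsHemicompact.sigmaCompactSpace (h : IsHemicompact X) : SigmaCompactSpace X := by
  obtain ⟨S, hS, hcof⟩ := h
  refine ⟨⟨S, hS, eq_univ_of_forall fun x ↦ mem_iUnion.mpr ?_⟩⟩
  obtain ⟨n, hn⟩ := hcof {x} isCompact_singleton
  exact ⟨n, hn rfl⟩

theorem IsHemicompact.weaklyLocallyCompactSpace [FirstCountableTopology X]
    (h : IsHemicompact X) : WeaklyLocallyCompactSpace X := by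
  obtain ⟨S, hS, hcof⟩ := h
  refine ⟨fun x ↦ ?_⟩
  by_contra! hx
  obtain ⟨U, hU⟩ := (𝓝 x).exists_antitone_basis
  have hy : ∀ n, ∃ y ∈ U n, y ∉ accumulate S n := fun n ↦ by
    by_contra! h
    exact hx _ (isCompact_accumulate hS n) (mem_of_superset (hU.mem n) h)
  choose y hyU hyS using hy
  obtain ⟨n, hn⟩ := hcof _ (hU.tendsto hyU).isCompact_insert_range
  exact hyS n (subset_accumulate (hn (mem_insert_of_mem _ ⟨n, rfl⟩)))

end Hemicompact

section ClopenHull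

variable {X : Type*} [TopologicalSpace X]

def clopenHull (s : Set X) : Set X :=
  ⋂₀ {C | IsClopen C ∧ s ⊆ C}

theorem subset_clopenHull_iff {s t : Set X} :
    t ⊆ clopenHull s ↔ ∀ C, IsClopen C → s ⊆ C → t ⊆ C := by
  simp [clopenHull, subset_sInter_iff]

theorem subset_clopenHull {s : Set X} : s ⊆ clopenHull s :=
  subset_clopenHull_iff.mpr fun _ _ ↦ id

theorem IsCompact.exists_isClopen_between (hB : IsTopologicalBasis {C : Set X | IsClopen C})
    {K U : Set X} (hK : IsCompact K) (hU : IsOpen U) (hKU : K ⊆ U) :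
    ∃ C, IsClopen C ∧ K ⊆ C ∧ C ⊆ U := by
  obtain ⟨t, ht⟩ := hK.elim_finite_subcover (fun C : {C // IsClopen C ∧ C ⊆ U} ↦ C.1)
    (fun C ↦ C.2.1.isOpen) fun x hx ↦ by
      obtain ⟨C, hC, hxC, hCU⟩ := hB.exists_subset_of_mem_open (hKU hx) hU
      exact mem_iUnion.mpr ⟨⟨C, hC, hCU⟩, hxC⟩
  exact ⟨_, t.finite_toSet.isClopen_biUnion fun C _ ↦ C.2.1, ht, iUnion₂_subset fun C _ ↦ C.2.2⟩

theorem IsCompact.clopenHull (hB : IsTopologicalBasis {C : Set X | IsClopen C}) {K : Set X}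
    (hK : IsCompact K) : IsCompact (clopenHull K) := by
  refine isCompact_of_finite_subcover fun U hUo hcov ↦ ?_
  obtain ⟨t, ht⟩ := hK.elim_finite_subcover U hUo (subset_clopenHull.trans hcov)
  obtain ⟨C, hC, hKC, hCU⟩ := hK.exists_isClopen_between hB (isOpen_biUnion fun i _ ↦ hUo i) ht
  exact ⟨t, (subset_clopenHull_iff.mp subset_rfl C hC hKC).trans hCU⟩


theorem subset_clopenHull_of_forall_continuousMap {K L : Set X}
    (h : ∀ g : C(X, Bool), EqOn g (fun _ ↦ false) L → EqOn g (fun _ ↦ false) K) :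
    K ⊆ clopenHull L := by
  refine subset_clopenHull_iff.mpr fun C hC hLC x hx ↦ ?_
  let g : C(X, Bool) := ⟨Cᶜ.boolIndicator, (continuous_boolIndicator_iff_isClopen _).mpr hC.compl⟩
  have hg : EqOn g (fun _ ↦ false) L := fun y hy ↦
    (notMem_iff_boolIndicator _ _).mp (not_not_intro (hLC hy))
  by_contra hxC
  exact Bool.false_ne_true ((h g hg hx).symm.trans ((mem_iff_boolIndicator _ _).mp hxC))

theorem isHemicompact_of_isCountablyGenerated_nhds
    (hB : IsTopologicalBasis {C : Set X | IsClopen C})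
    [IsCountablyGenerated (𝓝 (ContinuousMap.const X false))] : IsHemicompact X := by
  have hnhds := ContinuousMap.hasBasis_nhds_eqOn_s11 (ContinuousMap.const X false)
  obtain ⟨L, hL, hbasis⟩ := hnhds.exists_antitone_subbasis
  refine ⟨fun n ↦ clopenHull (L n), fun n ↦ (hL n).clopenHull hB, fun K hK ↦ ?_⟩
  obtain ⟨n, -, hn⟩ := hbasis.toHasBasis.mem_iff.mp (hnhds.mem_of_mem hK)
  exact ⟨n, subset_clopenHull_of_forall_continuousMap fun g hg ↦ hn hg⟩

end ClopenHull

theorem stmt11 {X : Type*} [TopologicalSpace X] [FirstCountableTopology X]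
    (hzd : ∀ (x : X) (U : Set X), IsOpen U → x ∈ U →
      ∃ V : Set X, IsClopen V ∧ x ∈ V ∧ V ⊆ U) :
    TopologicalSpace.MetrizableSpace C(X, Bool) ↔
      (WeaklyLocallyCompactSpace X ∧ SigmaCompactSpace X) := by
  refine ⟨fun _ ↦ ?_, fun ⟨_, _⟩ ↦ inferInstance⟩
  have hB : IsTopologicalBasis {C : Set X | IsClopen C} :=
    isTopologicalBasis_of_isOpen_of_nhds (fun _ hC ↦ hC.isOpen) fun x U hxU hU ↦ by
      simpa [and_assoc] using hzd x U hU hxU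
  have hX := isHemicompact_of_isCountablyGenerated_nhds hB
  exact ⟨hX.weaklyLocallyCompactSpace, hX.sigmaCompactSpace⟩
end

section
/- If (X_i)_{i∈ω} is a countable family of topological spaces none of which is compact, then the product Π_{i∈ω} X_i is not σ-compact. -/
open Set

/-- Diagonal argument: the `i`-th compact set is avoided in the `i`-th coordinate. -/
theorem Pi.exists_forall_notMem_of_isCompact {ι : Type*} {X : ι → Type*}
    [∀ i, TopologicalSpace (X i)] [∀ i, NoncompactSpace (X i)] {K : ι → Set (∀ i, X i)}
    (hK : ∀ i, IsCompact (K i)) : ∃ x : ∀ i, X i, ∀ i, x ∉ K i := by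
  have hproj : ∀ i, ∃ y : X i, y ∉ (fun x : ∀ j, X j => x i) '' K i := fun i =>
    ne_univ_iff_exists_notMem _ |>.mp ((hK i).image (continuous_apply i)).ne_univ
  choose x hx using hproj
  exact ⟨x, fun i hi => hx i ⟨x, hi, rfl⟩⟩

theorem stmt12 {X : ℕ → Type*} [∀ i, TopologicalSpace (X i)]
    (h : ∀ i, ¬ CompactSpace (X i)) :
    ¬ SigmaCompactSpace (∀ i, X i) := by
  intro hσ
  have : ∀ i, NoncompactSpace (X i) := fun i => not_compactSpace_iff.mp (h i)
  obtain ⟨x, hx⟩ := Pi.exists_forall_notMem_of_isCompact (isCompact_compactCovering (∀ i, X i))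
  obtain ⟨n, hn⟩ := exists_mem_compactCovering x
  exact hx n hn
end

section
/- If X' is a closed non-compact subset of a Polish space X consisting of non-isolated points, then there is a countably infinite closed discrete set T ⊆ X' and a discrete family {U_t : t ∈ T} of pairwise disjoint clopen subsets of X with t ∈ U_t for each t ∈ T, provided X is zero-dimensional; consequently C_k(X,2) contains a closed copy of the product Π_{t∈T} C_k(U_t,2). -/
/-!
Metrize `X` completely. The derived set `X'` is closed, hence complete, so not being compact it
is not totally bounded, and it contains an `ε`-separated sequence `T`; such a sequence is a closed
embedding of `ℕ`. Clopen neighbourhoods `U n ⊆ ball (T n) (ε / 4)` then form a discrete family of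
pairwise disjoint clopen sets. Gluing maps on the `U n`, extended by a constant off `⋃ n, U n`,
gives a map `∏ n, C(U n, 2) → C(X, 2)`; it is continuous because a compact set meets only finitely
many `U n`, and restriction is a continuous left inverse, so it is a closed embedding.
-/

open Set Function Topology Metric

theorem isOpen_setOf_isOpen_singleton {X : Type*} [TopologicalSpace X] :
    IsOpen {x : X | IsOpen ({x} : Set X)} := by
  rw [← biUnion_of_singleton {x : X | IsOpen ({x} : Set X)}]
  exact isOpen_biUnion fun x hx => hx

namespace Metric

variable {α ι : Type*} [PseudoMetricSpace α]

theorem exists_seq_pairwise_le_dist_of_not_totallyBounded {s : Set α} (hs : ¬TotallyBounded s) :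
    ∃ ε > 0, ∃ u : ℕ → α, (∀ n, u n ∈ s) ∧ Pairwise fun m n => ε ≤ dist (u m) (u n) := by
  obtain ⟨ε, hε, hcover⟩ : ∃ ε > 0, ∀ t : Set α, t.Finite → ¬s ⊆ ⋃ y ∈ t, ball y ε := by
    simpa [totallyBounded_iff] using hs
  have hfar : ∀ t : Set α, t.Finite → ∃ z, z ∈ s ∧ ∀ y ∈ t, ε ≤ dist y z := fun t ht => by
    obtain ⟨z, hzs, hz⟩ := not_subset.1 (hcover t ht)
    simp only [mem_iUnion₂, mem_ball, not_exists, not_lt] at hz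
    exact ⟨z, hzs, fun y hy => dist_comm z y ▸ hz y hy⟩
  obtain ⟨u, hu⟩ := seq_of_forall_finite_exists hfar
  have hlt : ∀ m n, m < n → ε ≤ dist (u m) (u n) := fun m n hmn =>
    (hu n).2 _ (mem_image_of_mem u hmn)
  refine ⟨ε, hε, u, fun n => (hu n).1, fun m n hmn => ?_⟩
  rcases hmn.lt_or_gt with h | h
  · exact hlt m n h
  · exact dist_comm (u n) (u m) ▸ hlt n m h

variable {u : ι → α} {ε : ℝ}

theorem subsingleton_setOf_ball_inter_ball_nonempty
    (hu : Pairwise fun m n => ε ≤ dist (u m) (u n)) (x : α) :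
    {n | (ball (u n) (ε / 4) ∩ ball x (ε / 4)).Nonempty}.Subsingleton := by
  rintro m ⟨y, hym, hyx⟩ n ⟨z, hzn, hzx⟩
  by_contra hmn
  rw [mem_ball] at hym hyx hzx hzn
  linarith [hu hmn, dist_comm y (u m), dist_comm x z, dist_triangle (u m) y x,
    dist_triangle x z (u n), dist_triangle (u m) x (u n)]

theorem pairwise_disjoint_ball_of_pairwise_le_dist
    (hu : Pairwise fun m n => ε ≤ dist (u m) (u n)) :
    Pairwise (Disjoint on fun n => ball (u n) (ε / 4)) := fun _ _ hmn =>
  disjoint_left.2 fun z hzm hzn =>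
    have hz : z ∈ ball z (ε / 4) := mem_ball_self (pos_of_mem_ball hzm)
    hmn (subsingleton_setOf_ball_inter_ball_nonempty hu z ⟨z, hzm, hz⟩ ⟨z, hzn, hz⟩)

end Metric

namespace ContinuousMap

variable {ι X Y : Type*} [TopologicalSpace X] [TopologicalSpace Y] {V : ι → Set X}

def glueCover (V : ι → Set X) (o : Option ι) : Set X :=
  o.elim (⋃ i, V i)ᶜ V

noncomputable def glue (hV : ∀ i, IsClopen (V i)) (hlf : LocallyFinite V)
    (hdisj : Pairwise (Disjoint on V)) (y₀ : Y) (f : ∀ i, C(V i, Y)) : C(X, Y) :=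
  liftCover (glueCover V)
    (fun o => Option.rec (motive := fun o => C(glueCover V o, Y)) (const _ y₀) f o)
    (by
      rintro (_ | i) (_ | j) x hi hj
      · rfl
      · exact absurd (mem_iUnion.2 ⟨j, hj⟩) hi
      · exact absurd (mem_iUnion.2 ⟨i, hi⟩) hj
      · obtain rfl : i = j := hdisj.eq (not_disjoint_iff.2 ⟨x, hi, hj⟩)
        rfl)
    (fun x => by
      by_cases hx : x ∈ ⋃ i, V i
      · obtain ⟨i, hi⟩ := mem_iUnion.1 hx
        exact ⟨some i, (hV i).isOpen.mem_nhds hi⟩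
      · exact ⟨none, (hlf.isClosed_iUnion fun i => (hV i).isClosed).isOpen_compl.mem_nhds hx⟩)

variable {hV : ∀ i, IsClopen (V i)} {hlf : LocallyFinite V} {hdisj : Pairwise (Disjoint on V)}
  {y₀ : Y}

theorem glue_apply_of_mem (f : ∀ i, C(V i, Y)) {i : ι} {x : X} (hx : x ∈ V i) :
    glue hV hlf hdisj y₀ f x = f i ⟨x, hx⟩ :=
  liftCover_coe (S := glueCover V) (i := some i) ⟨x, hx⟩

theorem glue_apply_of_notMem (f : ∀ i, C(V i, Y)) {x : X} (hx : x ∉ ⋃ i, V i) :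
    glue hV hlf hdisj y₀ f x = y₀ :=
  liftCover_coe (S := glueCover V) (i := none) ⟨x, hx⟩

theorem restrict_glue (f : ∀ i, C(V i, Y)) (i : ι) :
    (glue hV hlf hdisj y₀ f).restrict (V i) = f i :=
  liftCover_restrict (S := glueCover V) (i := some i)

theorem setOf_mapsTo_glue (K : Set X) (W : Set Y) :
    {f | MapsTo (glue hV hlf hdisj y₀ f) K W} =
      {i | (V i ∩ K).Nonempty}.pi (fun i => {g : C(V i, Y) | MapsTo g (Subtype.val ⁻¹' K) W}) ∩
        {_f | MapsTo (fun _ => y₀) (K \ ⋃ i, V i) W} := by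
  ext f
  simp only [mem_inter_iff, mem_pi]
  constructor
  · intro hf
    refine ⟨fun i _ y hy => ?_, fun x hx => ?_⟩
    · simpa only [glue_apply_of_mem f y.2] using hf hy
    · simpa only [glue_apply_of_notMem f hx.2] using hf hx.1
  · rintro ⟨hpieces, hrest⟩ x hx
    by_cases hxV : x ∈ ⋃ i, V i
    · obtain ⟨i, hi⟩ := mem_iUnion.1 hxV
      rw [glue_apply_of_mem f hi]
      exact hpieces i ⟨x, hi, hx⟩ (show x ∈ K from hx)
    · rw [glue_apply_of_notMem f hxV]
      exact hrest ⟨hx, hxV⟩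

theorem continuous_glue : Continuous (glue hV hlf hdisj y₀) := by
  refine continuous_compactOpen.2 fun K hK W hW => ?_
  rw [setOf_mapsTo_glue]
  exact (isOpen_set_pi (hlf.finite_nonempty_inter_compact hK) fun i _ => isOpen_setOfPred_mapsTo
    ((hV i).isClosed.isClosedEmbedding_subtypeVal.isCompact_preimage hK) hW).inter isOpen_const

theorem isClosedEmbedding_glue [T2Space Y] : IsClosedEmbedding (glue hV hlf hdisj y₀) :=
  Function.LeftInverse.isClosedEmbedding (f := fun g i => g.restrict (V i))
    (fun f => funext (restrict_glue f)) (continuous_pi fun _ => continuous_restrict _)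
    continuous_glue

end ContinuousMap

theorem stmt17 {X : Type*} [TopologicalSpace X] [PolishSpace X]
    (hzd : ∀ (x : X) (U : Set X), IsOpen U → x ∈ U →
      ∃ V : Set X, IsClopen V ∧ x ∈ V ∧ V ⊆ U)
    (hX' : ¬ IsCompact {x : X | ¬ IsOpen ({x} : Set X)}) :
    ∃ (T : ℕ → X) (U : ℕ → Set X),
      Function.Injective T ∧
      (∀ n, ¬ IsOpen ({T n} : Set X)) ∧
      IsClosed (Set.range T) ∧
      DiscreteTopology ↥(Set.range T) ∧
      (∀ n, IsClopen (U n)) ∧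
      (Set.univ : Set ℕ).PairwiseDisjoint U ∧
      (∀ n, T n ∈ U n) ∧
      (∀ x : X, ∃ V ∈ nhds x, {n : ℕ | (U n ∩ V).Nonempty}.Subsingleton) ∧
      ∃ e : (∀ n : ℕ, C(U n, Bool)) → C(X, Bool), Topology.IsClosedEmbedding e := by
  let := TopologicalSpace.upgradeIsCompletelyMetrizable X
  have hX'closed : IsClosed {x : X | ¬IsOpen ({x} : Set X)} :=
    isOpen_setOf_isOpen_singleton.isClosed_compl
  obtain ⟨ε, hε, T, hTX', hTsep⟩ := exists_seq_pairwise_le_dist_of_not_totallyBounded fun h =>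
    hX' (isCompact_iff_totallyBounded_isComplete.2 ⟨h, hX'closed.isComplete⟩)
  have hT : IsClosedEmbedding T := isClosedEmbedding_of_pairwise_le_dist hε hTsep
  choose U hU hTU hUball using fun n =>
    hzd (T n) (ball (T n) (ε / 4)) isOpen_ball (mem_ball_self (by positivity))
  have hUdisj : Pairwise (Disjoint on U) := fun m n hmn =>
    (pairwise_disjoint_ball_of_pairwise_le_dist hTsep hmn).mono (hUball m) (hUball n)
  have hUdiscrete : ∀ x : X, ∃ W ∈ 𝓝 x, {n : ℕ | (U n ∩ W).Nonempty}.Subsingleton := fun x =>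
    ⟨ball x (ε / 4), ball_mem_nhds x (by positivity),
      (subsingleton_setOf_ball_inter_ball_nonempty hTsep x).anti fun n ⟨y, hyU, hyx⟩ =>
        ⟨y, hUball n hyU, hyx⟩⟩
  have hUlf : LocallyFinite U := fun x =>
    let ⟨W, hW, hsub⟩ := hUdiscrete x
    ⟨W, hW, hsub.finite⟩
  exact ⟨T, U, hT.injective, hTX', hT.isClosed_range,
    hT.isEmbedding.toHomeomorph.symm.isEmbedding.discreteTopology, hU, pairwise_univ.2 hUdisj,
    hTU, hUdiscrete, _,
    ContinuousMap.isClosedEmbedding_glue (hV := hU) (hlf := hUlf) (hdisj := hUdisj) (y₀ := false)⟩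
end
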